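/- arXiv:gr-qc/0611010 — 2 statements merged into one kernel-verified Lean document; each statement's English description precedes it below -/
import Mathlib

section
/- (Boundary identity lemma.) Suppose α = 0 and β_i = 0. Let n^i be a unit vector, let F be a relatively open subset of a plane with unit normal n contained in the boundary of a domain Ω, and let g_ij, K_ij, f_kij be smooth time-dependent tensor fields on a neighborhood (in the closure of Ω) of F solving the homogeneous linearized EC system ∂_t g_ij = −2K_ij, ∂_t K_ij = −∂^k f_kij, ∂_t f_kij = −∂_k K_ij, and satisfying at every point of F and every time the boundary conditions n^i τ^{jk} K_ij = 0, n^k n^i n^j f_kij = 0, n^k τ^{il} τ^{jm} f_kij = 0. Let C_j := ∂^l K_lj − ∂_j K_l^l. Then at every point of F and every time: n^j C_j = 0, τ_j^p n^l ∂_l C^j = 0, and consequently (∂_t C_j)(n^l ∂_l C^j) = 0. -/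
open scoped BigOperators

/-- Partial derivative in the `i`-th spatial coordinate direction on `ℝ³`. -/
noncomputable def pd (i : Fin 3) (u : (Fin 3 → ℝ) → ℝ) : (Fin 3 → ℝ) → ℝ :=
  fun x => fderiv ℝ u x (Pi.single i 1)

/-- Time derivative of a time-dependent field. -/
noncomputable def dt (u : ℝ → (Fin 3 → ℝ) → ℝ) (t : ℝ) (x : Fin 3 → ℝ) : ℝ :=
  deriv (fun s => u s x) t

/-- A time-dependent field, jointly smooth in `(t,x)`. -/
def SmoothT (u : ℝ → (Fin 3 → ℝ) → ℝ) : Prop :=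
  ContDiff ℝ (⊤ : ℕ∞) fun p : ℝ × (Fin 3 → ℝ) => u p.1 p.2

/-- The orthogonal projection `τ_i^j = δ_i^j − n_i n^j` onto the plane orthogonal
to `n`. -/
def tau (n : Fin 3 → ℝ) (i j : Fin 3) : ℝ := (if i = j then 1 else 0) - n i * n j

/-- Momentum constraint function `C_j = ∂^l K_lj − ∂_j K_l^l`. -/
noncomputable def Cmom (K : Fin 3 → Fin 3 → ℝ → (Fin 3 → ℝ) → ℝ) (j : Fin 3) (t : ℝ) :
    (Fin 3 → ℝ) → ℝ :=
  fun x => (∑ l, pd l (K l j t) x) - pd j (fun y => ∑ l, K l l t y) x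

/- ============ auxiliary machinery ============ -/

abbrev V3 := Fin 3 → ℝ

-- second derivative swap
lemma fd_swap {E : Type*} [NormedAddCommGroup E] [NormedSpace ℝ E] (g : E → ℝ)
    (hg : ContDiff ℝ (⊤ : ℕ∞) g) (x v w : E) :
    fderiv ℝ (fun y => fderiv ℝ g y w) x v = fderiv ℝ (fun y => fderiv ℝ g y v) x w := by
  have hd : ContDiff ℝ (⊤ : ℕ∞) (fderiv ℝ g) := hg.fderiv_right (by simp)
  have h1 : ∀ u : E, fderiv ℝ (fun y => fderiv ℝ g y u) x =
      (fderiv ℝ (fderiv ℝ g) x).flip u := by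
    intro u
    have := fderiv_clm_apply (𝕜 := ℝ) (c := fderiv ℝ g) (u := fun _ => u)
      (hd.differentiable (by simp) x) (differentiableAt_const u)
    simpa using this
  have hsymm : fderiv ℝ (fderiv ℝ g) x v w = fderiv ℝ (fderiv ℝ g) x w v := by
    exact (hg.contDiffAt.isSymmSndFDerivAt (by rw [minSmoothness_of_isRCLikeNormedField]; exact WithTop.coe_le_coe.mpr le_top)) v w
  rw [h1 w, h1 v]
  simpa using hsymm

-- slice lemmas
lemma slice_deriv (G : ℝ × V3 → ℝ) (t : ℝ) (x : V3) (hG : DifferentiableAt ℝ G (t, x)) :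
    deriv (fun s => G (s, x)) t = fderiv ℝ G (t, x) (1, 0) := by
  have hc : HasDerivAt (fun s : ℝ => (s, x)) ((1 : ℝ), (0 : V3)) t := by
    simpa using (hasDerivAt_id t).prodMk (hasDerivAt_const t x)
  have := hG.hasFDerivAt.comp_hasDerivAt t hc
  exact this.deriv

lemma slice_fderiv (G : ℝ × V3 → ℝ) (t : ℝ) (x : V3) (w : V3)
    (hG : DifferentiableAt ℝ G (t, x)) :
    fderiv ℝ (fun y => G (t, y)) x w = fderiv ℝ G (t, x) (0, w) := by
  have hc : HasFDerivAt (fun y : V3 => (t, y)) (ContinuousLinearMap.inr ℝ ℝ V3) x :=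
    (hasFDerivAt_const t x).prodMk (hasFDerivAt_id x)
  have := hG.hasFDerivAt.comp x hc
  have h2 := this.fderiv
  rw [show (fun y : V3 => G (t, y)) = G ∘ (fun y : V3 => (t, y)) from rfl, h2]
  rfl
section smoothT
variable {u : ℝ → V3 → ℝ}
/-- joint function -/
noncomputable def Ju (u : ℝ → V3 → ℝ) : ℝ × V3 → ℝ := fun p => u p.1 p.2

lemma SmoothT.ju (hu : SmoothT u) : ContDiff ℝ (⊤ : ℕ∞) (Ju u) := hu

lemma SmoothT.slice (hu : SmoothT u) (t : ℝ) : ContDiff ℝ (⊤ : ℕ∞) (u t) := by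
  have : u t = (Ju u) ∘ (fun y : V3 => (t, y)) := rfl
  rw [this]
  exact hu.ju.comp (contDiff_const.prodMk contDiff_id)

lemma SmoothT.diffT (hu : SmoothT u) (x : V3) : Differentiable ℝ (fun s => u s x) := by
  have : (fun s => u s x) = (Ju u) ∘ (fun s : ℝ => (s, x)) := rfl
  rw [this]
  exact (hu.ju.differentiable (by simp)).comp ((differentiable_id).prodMk (differentiable_const x))

lemma SmoothT.dt_eq (hu : SmoothT u) (t : ℝ) (x : V3) :
    deriv (fun s => u s x) t = fderiv ℝ (Ju u) (t, x) (1, 0) :=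
  slice_deriv (Ju u) t x ((hu.ju.differentiable (by simp)) (t, x))

lemma SmoothT.fd_eq (hu : SmoothT u) (t : ℝ) (x : V3) (w : V3) :
    fderiv ℝ (u t) x w = fderiv ℝ (Ju u) (t, x) (0, w) :=
  slice_fderiv (Ju u) t x w ((hu.ju.differentiable (by simp)) (t, x))

/-- the function p ↦ fderiv (Ju u) p z is smooth -/
lemma SmoothT.fdz (hu : SmoothT u) (z : ℝ × V3) :
    ContDiff ℝ (⊤ : ℕ∞) (fun p => fderiv ℝ (Ju u) p z) := by
  have hd : ContDiff ℝ (⊤ : ℕ∞) (fderiv ℝ (Ju u)) := hu.ju.fderiv_right (by simp)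
  exact (ContinuousLinearMap.apply ℝ ℝ z).contDiff.comp hd

lemma SmoothT.diff_fd_t (hu : SmoothT u) (x : V3) (w : V3) :
    Differentiable ℝ (fun s => fderiv ℝ (u s) x w) := by
  have : (fun s => fderiv ℝ (u s) x w) =
      (fun p => fderiv ℝ (Ju u) p (0, w)) ∘ (fun s : ℝ => (s, x)) := by
    funext s; exact hu.fd_eq s x w
  rw [this]
  exact ((hu.fdz (0, w)).differentiable (by simp)).comp
    ((differentiable_id).prodMk (differentiable_const x))

lemma SmoothT.contDiff_dt (hu : SmoothT u) (t : ℝ) :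
    ContDiff ℝ (⊤ : ℕ∞) (fun y => deriv (fun s => u s y) t) := by
  have : (fun y => deriv (fun s => u s y) t) =
      (fun p => fderiv ℝ (Ju u) p (1, 0)) ∘ (fun y : V3 => (t, y)) := by
    funext y; exact hu.dt_eq t y
  rw [this]
  exact (hu.fdz (1, 0)).comp (contDiff_const.prodMk contDiff_id)

/-- mixed partial swap: d/dt of spatial derivative = spatial derivative of d/dt -/
lemma SmoothT.swap (hu : SmoothT u) (t : ℝ) (x : V3) (w : V3) :
    deriv (fun s => fderiv ℝ (u s) x w) t =
      fderiv ℝ (fun y => deriv (fun s => u s y) t) x w := by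
  have h1 : (fun s => fderiv ℝ (u s) x w) = (fun s => fderiv ℝ (Ju u) (s, x) (0, w)) := by
    funext s; exact hu.fd_eq s x w
  have h2 : (fun y => deriv (fun s => u s y) t) = (fun y => fderiv ℝ (Ju u) (t, y) (1, 0)) := by
    funext y; exact hu.dt_eq t y
  rw [h1, h2]
  have hG := hu.ju
  rw [slice_deriv (fun p => fderiv ℝ (Ju u) p (0, w)) t x
      (((hu.fdz (0, w)).differentiable (by simp)) (t, x)),
    slice_fderiv (fun p => fderiv ℝ (Ju u) p (1, 0)) t x w
      (((hu.fdz (1, 0)).differentiable (by simp)) (t, x))]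
  exact fd_swap (Ju u) hG (t, x) (1, 0) (0, w)

lemma SmoothT.contDiff_ddt (hu : SmoothT u) (t : ℝ) :
    ContDiff ℝ (⊤ : ℕ∞) (fun y => deriv (fun s => deriv (fun r => u r y) s) t) := by
  have h1 : (fun y => deriv (fun s => deriv (fun r => u r y) s) t) =
      (fun p => fderiv ℝ (fun q => fderiv ℝ (Ju u) q (1, 0)) p (1, 0)) ∘
        (fun y : V3 => (t, y)) := by
    funext y
    have h2 : (fun s => deriv (fun r => u r y) s) = (fun s => fderiv ℝ (Ju u) (s, y) (1, 0)) := by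
      funext s; exact hu.dt_eq s y
    show deriv (fun s => deriv (fun r => u r y) s) t = _
    rw [h2]
    exact slice_deriv _ t y (((hu.fdz (1, 0)).differentiable (by simp)) (t, y))
  rw [h1]
  exact ((hu.fdz (1, 0)).fderiv_right (by simp) |>.clm_apply contDiff_const).comp
    (contDiff_const.prodMk contDiff_id)
end smoothT

section alg
variable {n : V3} (hn : ∑ i, n i ^ 2 = 1)

lemma tau_symm (n : V3) (i j : Fin 3) : tau n i j = tau n j i := by
  unfold tau; rcases eq_or_ne i j with h | h
  · subst h; ring
  · rw [if_neg h, if_neg (Ne.symm h)]; ring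

lemma tansum (hn : ∑ i, n i ^ 2 = 1) (b : Fin 3) : ∑ a, n a * tau n a b = 0 := by
  have : ∑ a, n a * tau n a b = (∑ a, n a * (if a = b then 1 else 0)) - (∑ a, n a ^ 2) * n b := by
    rw [Finset.sum_mul, ← Finset.sum_sub_distrib]
    refine Finset.sum_congr rfl fun a _ => ?_
    unfold tau; ring
  rw [this, hn]
  simp [Finset.sum_ite_eq' Finset.univ b (fun a => n a)]

lemma tau_proj (hn : ∑ i, n i ^ 2 = 1) (i j : Fin 3) :
    ∑ m, tau n i m * tau n m j = tau n i j := by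
  have : ∀ m, tau n i m * tau n m j =
      ((if i = m then 1 else 0) * (if m = j then 1 else 0)
        - (if i = m then 1 else 0) * (n m * n j))
        - ((if m = j then 1 else 0) * (n i * n m) - (n i * n j) * n m ^ 2) := by
    intro m; unfold tau; ring
  rw [Finset.sum_congr rfl fun m _ => this m]
  rw [Finset.sum_sub_distrib, Finset.sum_sub_distrib, Finset.sum_sub_distrib, ← Finset.mul_sum, hn]
  unfold tau
  simp [Finset.sum_ite_eq Finset.univ i, Finset.sum_ite_eq' Finset.univ j, mul_comm]
end alg

-- vectors
noncomputable def ev (i : Fin 3) : V3 := Pi.single i 1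
def vt (n : V3) (a : Fin 3) : V3 := fun b => tau n a b

lemma sum_nsmul_ev (n : V3) : ∑ i, n i • ev i = n := by
  funext b
  rw [Finset.sum_apply]
  simp [ev, Pi.single_apply]

lemma ev_decomp (n : V3) (hn : ∑ i, n i ^ 2 = 1) (a : Fin 3) : ev a = n a • n + vt n a := by
  funext b
  simp [ev, vt, tau, Pi.single_apply, eq_comm]

lemma sum_nsmul_vt (n : V3) (hn : ∑ i, n i ^ 2 = 1) : ∑ a, n a • vt n a = 0 := by
  funext b
  rw [Finset.sum_apply]
  simpa [vt] using tansum hn b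

lemma vt_tangent (n : V3) (hn : ∑ i, n i ^ 2 = 1) (a : Fin 3) : ∑ i, n i * vt n a i = 0 := by
  have : ∀ i, n i * vt n a i = n i * tau n i a := by
    intro i; simp [vt, tau_symm n a i]
  rw [Finset.sum_congr rfl fun i _ => this i]
  exact tansum hn a

-- linearity lemmas
lemma fd_apply_sum {ι : Type*} [Fintype ι] (g : V3 → ℝ) (x : V3) (c : ι → ℝ) (v : ι → V3) :
    fderiv ℝ g x (∑ i, c i • v i) = ∑ i, c i * fderiv ℝ g x (v i) := by
  rw [map_sum]
  exact Finset.sum_congr rfl fun i _ => by rw [map_smul]; rfl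

lemma fd_lin {ι : Type*} [Fintype ι] (g : ι → V3 → ℝ) (c : ι → ℝ) (x : V3) (w : V3)
    (hg : ∀ i, DifferentiableAt ℝ (g i) x) :
    fderiv ℝ (fun y => ∑ i, c i * g i y) x w = ∑ i, c i * fderiv ℝ (g i) x w := by
  rw [fderiv_fun_sum (fun i _ => ((hg i).const_mul (c i)))]
  rw [ContinuousLinearMap.sum_apply]
  refine Finset.sum_congr rfl fun i _ => ?_
  rw [fderiv_const_mul (hg i) (c i)]
  rfl

lemma deriv_lin {ι : Type*} [Fintype ι] (φ : ι → ℝ → ℝ) (c : ι → ℝ) (t : ℝ)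
    (hφ : ∀ i, DifferentiableAt ℝ (φ i) t) :
    deriv (fun s => ∑ i, c i * φ i s) t = ∑ i, c i * deriv (φ i) t := by
  rw [deriv_fun_sum (fun i _ => ((hφ i).const_mul (c i)))]
  refine Finset.sum_congr rfl fun i _ => ?_
  rw [deriv_const_mul (c i) (hφ i)]

lemma tan_deriv_zero (n : V3) (c : ℝ) (F : Set V3)
    (hF_plane : ∀ x ∈ F, ∑ i, n i * x i = c)
    (hF_relopen : ∀ x ∈ F, ∃ ε > 0, ∀ y, (∑ i, n i * y i = c) → dist y x < ε → y ∈ F)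
    (u : V3 → ℝ) (x : V3) (hx : x ∈ F) (hu : DifferentiableAt ℝ u x)
    (h0 : ∀ y ∈ F, u y = 0) (w : V3) (hw : ∑ i, n i * w i = 0) :
    fderiv ℝ u x w = 0 := by
  obtain ⟨ε, hε, hball⟩ := hF_relopen x hx
  have hL : HasDerivAt (fun s : ℝ => x + s • w) w 0 := by
    simpa using ((hasDerivAt_id (0:ℝ)).smul_const w).const_add x
  have hcomp : HasDerivAt (fun s : ℝ => u (x + s • w)) (fderiv ℝ u x w) 0 := by
    have hu' : HasFDerivAt u (fderiv ℝ u x) (x + (0:ℝ) • w) := by simpa using hu.hasFDerivAt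
    have := hu'.comp_hasDerivAt (0:ℝ) hL
    exact this
  have hmem : ∀ s : ℝ, |s| < ε / (‖w‖ + 1) → (x + s • w) ∈ F := by
    intro s hs
    apply hball
    · rw [← hF_plane x hx]
      have : ∀ i, n i * (x + s • w) i = n i * x i + s * (n i * w i) := by
        intro i; simp [Pi.add_apply, Pi.smul_apply]; ring
      rw [Finset.sum_congr rfl fun i _ => this i, Finset.sum_add_distrib, ← Finset.mul_sum, hw]
      ring
    · have : dist (x + s • w) x = |s| * ‖w‖ := by
        rw [dist_eq_norm]
        simp [norm_smul, abs_mul]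
      rw [this]
      calc |s| * ‖w‖ ≤ |s| * (‖w‖ + 1) := by
            apply mul_le_mul_of_nonneg_left (by linarith [norm_nonneg w]) (abs_nonneg s)
        _ < ε / (‖w‖ + 1) * (‖w‖ + 1) := by
            apply mul_lt_mul_of_pos_right hs (by linarith [norm_nonneg w])
        _ = ε := by field_simp
  have hev : (fun s : ℝ => u (x + s • w)) =ᶠ[nhds (0:ℝ)] (fun _ => 0) := by
    have hpos : 0 < ε / (‖w‖ + 1) := by positivity
    filter_upwards [Metric.ball_mem_nhds (0:ℝ) hpos] with s hs
    exact h0 _ (hmem s (by simpa [Real.dist_eq] using hs))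
  have h2 : HasDerivAt (fun _ : ℝ => (0:ℝ)) (fderiv ℝ u x w) 0 :=
    (Filter.EventuallyEq.hasDerivAt_iff hev).mp hcomp
  have h3 := h2.deriv
  simpa using h3.symm

lemma extend_eq (Ω U : Set V3) (hΩ : IsOpen Ω) (hU : IsOpen U) (F : Set V3)
    (hF_bd : F ⊆ frontier Ω) (hFU : F ⊆ U)
    (u v : V3 → ℝ) (hu : Continuous u) (hv : Continuous v)
    (h : ∀ y ∈ U ∩ Ω, u y = v y) (x : V3) (hx : x ∈ F) : u x = v x := by
  have hxcl : x ∈ closure (U ∩ Ω) := by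
    apply hU.inter_closure
    exact ⟨hFU hx, (hF_bd hx).1⟩
  exact Set.EqOn.closure (fun y hy => h y hy) hu hv hxcl

lemma contDiff_fd (g : V3 → ℝ) (hg : ContDiff ℝ (⊤ : ℕ∞) g) (w : V3) :
    ContDiff ℝ (⊤ : ℕ∞) (fun y => fderiv ℝ g y w) :=
  (ContinuousLinearMap.apply ℝ ℝ w).contDiff.comp (hg.fderiv_right (by simp))

lemma fd_lin2 (g : Fin 3 → Fin 3 → V3 → ℝ) (c : Fin 3 → Fin 3 → ℝ) (x w : V3)
    (hg : ∀ i j, DifferentiableAt ℝ (g i j) x) :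
    fderiv ℝ (fun y => ∑ i, ∑ j, c i j * g i j y) x w
      = ∑ i, ∑ j, c i j * fderiv ℝ (g i j) x w := by
  rw [fderiv_fun_sum (fun i _ => DifferentiableAt.fun_sum (fun j _ => (hg i j).const_mul _))]
  rw [ContinuousLinearMap.sum_apply]
  exact Finset.sum_congr rfl fun i _ => fd_lin (g i) (c i) x w (hg i)

lemma deriv_lin2 (φ : Fin 3 → Fin 3 → ℝ → ℝ) (c : Fin 3 → Fin 3 → ℝ) (t : ℝ)
    (hφ : ∀ i j, DifferentiableAt ℝ (φ i j) t) :
    deriv (fun s => ∑ i, ∑ j, c i j * φ i j s) t = ∑ i, ∑ j, c i j * deriv (φ i j) t := by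
  rw [deriv_fun_sum (fun i _ => DifferentiableAt.fun_sum (fun j _ => (hφ i j).const_mul _))]
  exact Finset.sum_congr rfl fun i _ => deriv_lin (φ i) (c i) t (hφ i)

lemma deriv_lin3 (φ : Fin 3 → Fin 3 → Fin 3 → ℝ → ℝ) (c : Fin 3 → Fin 3 → Fin 3 → ℝ) (t : ℝ)
    (hφ : ∀ k i j, DifferentiableAt ℝ (φ k i j) t) :
    deriv (fun s => ∑ k, ∑ i, ∑ j, c k i j * φ k i j s) t
      = ∑ k, ∑ i, ∑ j, c k i j * deriv (φ k i j) t := by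
  rw [deriv_fun_sum (fun k _ => DifferentiableAt.fun_sum
    (fun i _ => DifferentiableAt.fun_sum (fun j _ => (hφ k i j).const_mul _)))]
  exact Finset.sum_congr rfl fun k _ => deriv_lin2 (φ k) (c k) t (hφ k)

lemma smoothT_sum1 (u : Fin 3 → ℝ → V3 → ℝ) (hu : ∀ a, SmoothT (u a)) (c : Fin 3 → ℝ) :
    SmoothT (fun t y => ∑ a, c a * u a t y) := by
  apply ContDiff.sum; intro a _; exact contDiff_const.mul (hu a)

lemma smoothT_sum2 (u : Fin 3 → Fin 3 → ℝ → V3 → ℝ) (hu : ∀ a b, SmoothT (u a b))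
    (c : Fin 3 → Fin 3 → ℝ) : SmoothT (fun t y => ∑ a, ∑ b, c a b * u a b t y) := by
  apply ContDiff.sum; intro a _; apply ContDiff.sum; intro b _
  exact contDiff_const.mul (hu a b)

lemma fd_n_expand (g : V3 → ℝ) (x : V3) (n : V3) :
    fderiv ℝ g x n = ∑ k, n k * fderiv ℝ g x (Pi.single k 1) := by
  conv_lhs => rw [← sum_nsmul_ev n]
  exact fd_apply_sum g x n ev

lemma fd_decomp {n : V3} (hn : ∑ i, n i ^ 2 = 1) (g : V3 → ℝ) (x : V3) (a : Fin 3) :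
    fderiv ℝ g x (Pi.single a 1) = n a * fderiv ℝ g x n + fderiv ℝ g x (vt n a) := by
  rw [show (Pi.single a 1 : V3) = n a • n + vt n a from ev_decomp n hn a, map_add, map_smul]
  rfl

lemma sum_tau_smul_e (n : V3) (p : Fin 3) :
    (∑ j, tau n j p • (Pi.single j 1 : V3)) = (fun b => tau n b p) := by
  funext b
  rw [Finset.sum_apply]
  simp [Pi.single_apply]

lemma fderiv_ext (Ω U : Set V3) (hΩ : IsOpen Ω) (hU : IsOpen U) (F : Set V3)
    (hF_bd : F ⊆ frontier Ω) (hFU : F ⊆ U)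
    (u v : V3 → ℝ) (hu : ContDiff ℝ (⊤ : ℕ∞) u) (hv : ContDiff ℝ (⊤ : ℕ∞) v)
    (h : ∀ y ∈ U ∩ Ω, u y = v y) (w : V3) (x : V3) (hx : x ∈ F) :
    fderiv ℝ u x w = fderiv ℝ v x w := by
  apply extend_eq Ω U hΩ hU F hF_bd hFU _ _ (contDiff_fd u hu w).continuous
    (contDiff_fd v hv w).continuous _ x hx
  intro y hy
  have hev : u =ᶠ[nhds y] v :=
    Filter.eventuallyEq_of_mem ((hU.inter hΩ).mem_nhds hy) h
  rw [hev.fderiv_eq]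
lemma fd_mul_add (g h : V3 → ℝ) (a : ℝ) (x w : V3) (hg : DifferentiableAt ℝ g x)
    (hh : DifferentiableAt ℝ h x) :
    fderiv ℝ (fun y => a * g y + h y) x w = a * fderiv ℝ g x w + fderiv ℝ h x w := by
  rw [fderiv_fun_add (hg.const_mul a) hh, ContinuousLinearMap.add_apply, fderiv_const_mul hg a]
  rfl

lemma sum3_rot (A : Fin 3 → Fin 3 → Fin 3 → ℝ) :
    (∑ i, ∑ j, ∑ k, A i j k) = ∑ k, ∑ i, ∑ j, A i j k := by
  rw [show (∑ i, ∑ j, ∑ k, A i j k) = ∑ i, ∑ k, ∑ j, A i j k from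
    Finset.sum_congr rfl fun i _ => Finset.sum_comm, Finset.sum_comm]

lemma sum4_rot (A : Fin 3 → Fin 3 → Fin 3 → Fin 3 → ℝ) :
    (∑ k, ∑ i, ∑ j, ∑ m, A k i j m) = ∑ m, ∑ k, ∑ i, ∑ j, A k i j m := by
  rw [show (∑ k, ∑ i, ∑ j, ∑ m, A k i j m) = ∑ k, ∑ m, ∑ i, ∑ j, A k i j m from
    Finset.sum_congr rfl fun k _ => sum3_rot (A k), Finset.sum_comm]

section main
variable {Ω U F : Set V3} {n : V3} {c : ℝ}
  {K : Fin 3 → Fin 3 → ℝ → V3 → ℝ} {f : Fin 3 → Fin 3 → Fin 3 → ℝ → V3 → ℝ}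

/-- evolution equation for `f` extended to `F`. -/
lemma hfevF (hΩ : IsOpen Ω) (hU : IsOpen U) (hF_bd : F ⊆ frontier Ω) (hFU : F ⊆ U)
    (hK_smooth : ∀ i j, SmoothT (K i j)) (hf_smooth : ∀ k i j, SmoothT (f k i j))
    (hFev : ∀ k i j t, ∀ x ∈ U ∩ Ω, dt (f k i j) t x = -pd k (K i j t) x) :
    ∀ k i j t, ∀ x ∈ F,
      deriv (fun s => f k i j s x) t = -(fderiv ℝ (K i j t) x (Pi.single k 1)) := by
  intro k i j t x hx
  apply extend_eq Ω U hΩ hU F hF_bd hFU _ _ ((hf_smooth k i j).contDiff_dt t).continuous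
    ((contDiff_fd _ ((hK_smooth i j).slice t) _).continuous.neg) _ x hx
  intro y hy
  exact hFev k i j t y hy

/-- normal derivative of a `K`-contraction is minus the time derivative of the
corresponding `n`-contraction of `f`, on `F`. -/
lemma key1 (hΩ : IsOpen Ω) (hU : IsOpen U) (hF_bd : F ⊆ frontier Ω) (hFU : F ⊆ U)
    (hK_smooth : ∀ i j, SmoothT (K i j)) (hf_smooth : ∀ k i j, SmoothT (f k i j))
    (hFev : ∀ k i j t, ∀ x ∈ U ∩ Ω, dt (f k i j) t x = -pd k (K i j t) x)
    (c2 : Fin 3 → Fin 3 → ℝ) (t : ℝ) (x : V3) (hx : x ∈ F) :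
    fderiv ℝ (fun y => ∑ i, ∑ j, c2 i j * K i j t y) x n
      = -deriv (fun s => ∑ k, ∑ i, ∑ j, (n k * c2 i j) * f k i j s x) t := by
  have hext := hfevF hΩ hU hF_bd hFU hK_smooth hf_smooth hFev
  rw [fd_lin2 (fun i j => K i j t) c2 x n
    (fun i j => ((hK_smooth i j).slice t).differentiable (by simp) x)]
  rw [deriv_lin3 (fun k i j => fun s => f k i j s x) _ t
    (fun k i j => (hf_smooth k i j).diffT x t)]
  have : ∀ k i j, (n k * c2 i j) * deriv (fun s => f k i j s x) t
      = -((n k * c2 i j) * fderiv ℝ (K i j t) x (Pi.single k 1)) := by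
    intro k i j; rw [hext k i j t x hx]; ring
  rw [Finset.sum_congr rfl fun k _ => Finset.sum_congr rfl fun i _ =>
    Finset.sum_congr rfl fun j _ => this k i j]
  simp only [Finset.sum_neg_distrib, neg_neg]
  rw [← sum3_rot (fun i j k => (n k * c2 i j) * fderiv ℝ (K i j t) x (Pi.single k 1))]
  refine Finset.sum_congr rfl fun i _ => Finset.sum_congr rfl fun j _ => ?_
  rw [fd_n_expand (K i j t) x n, Finset.mul_sum]
  exact Finset.sum_congr rfl fun k _ => by ring
end main
section main2
variable {Ω U F : Set V3} {n : V3} {c : ℝ}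
  {K : Fin 3 → Fin 3 → ℝ → V3 → ℝ} {f : Fin 3 → Fin 3 → Fin 3 → ℝ → V3 → ℝ}

/-- trace of bc3 : the fully tangential trace of `n·f` vanishes on `F`. -/
lemma bc3_trace (hn : ∑ i, n i ^ 2 = 1)
    (bc3 : ∀ t, ∀ x ∈ F, ∀ l m,
      ∑ k, ∑ i, ∑ j, n k * tau n i l * tau n j m * f k i j t x = 0) :
    ∀ s, ∀ y ∈ F, ∑ k, ∑ i, ∑ j, (n k * tau n i j) * f k i j s y = 0 := by
  intro s y hy
  have coef : ∀ k i j, (n k * tau n i j) * f k i j s y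
      = ∑ m, n k * tau n i m * tau n j m * f k i j s y := by
    intro k i j
    have hc : ∑ m, n k * tau n i m * tau n j m = n k * tau n i j := by
      calc ∑ m, n k * tau n i m * tau n j m = n k * ∑ m, tau n i m * tau n m j := by
            rw [Finset.mul_sum]
            exact Finset.sum_congr rfl fun m _ => by rw [tau_symm n j m]; ring
        _ = n k * tau n i j := by rw [tau_proj hn]
    rw [← Finset.sum_mul, hc]
  rw [Finset.sum_congr rfl fun k _ => Finset.sum_congr rfl fun i _ =>
    Finset.sum_congr rfl fun j _ => coef k i j]
  rw [sum4_rot (fun k i j m => n k * tau n i m * tau n j m * f k i j s y)]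
  rw [Finset.sum_congr rfl fun m _ => bc3 s y hy m m]
  simp

/-- Claim 1: `n · C = 0` on `F`. -/
lemma claim1 (hΩ : IsOpen Ω) (hU : IsOpen U) (hn : ∑ i, n i ^ 2 = 1)
    (hF_plane : ∀ x ∈ F, ∑ i, n i * x i = c)
    (hF_bd : F ⊆ frontier Ω)
    (hF_relopen : ∀ x ∈ F, ∃ ε > 0, ∀ y, (∑ i, n i * y i = c) → dist y x < ε → y ∈ F)
    (hFU : F ⊆ U)
    (hK_smooth : ∀ i j, SmoothT (K i j)) (hf_smooth : ∀ k i j, SmoothT (f k i j))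
    (hK_symm : ∀ i j, K i j = K j i)
    (hFev : ∀ k i j t, ∀ x ∈ U ∩ Ω, dt (f k i j) t x = -pd k (K i j t) x)
    (bc1 : ∀ t, ∀ x ∈ F, ∀ m, ∑ i, ∑ j, n i * tau n j m * K i j t x = 0)
    (bc3 : ∀ t, ∀ x ∈ F, ∀ l m,
      ∑ k, ∑ i, ∑ j, n k * tau n i l * tau n j m * f k i j t x = 0) :
    ∀ t, ∀ x ∈ F, ∑ j, n j * Cmom K j t x = 0 := by
  intro t x hx
  have hKd : ∀ a b y, DifferentiableAt ℝ (K a b t) y :=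
    fun a b y => ((hK_smooth a b).slice t).differentiable (by simp) y
  -- split Cmom
  have e1 : ∑ j, n j * Cmom K j t x
      = (∑ j, n j * ∑ l, fderiv ℝ (K l j t) x (Pi.single l 1))
        - ∑ j, n j * fderiv ℝ (fun y => ∑ l, K l l t y) x (Pi.single j 1) := by
    simp only [Cmom, pd, mul_sub, Finset.sum_sub_distrib]
  -- divergence term
  have e3 : ∑ j, n j * ∑ l, fderiv ℝ (K l j t) x (Pi.single l 1)
      = ∑ l, fderiv ℝ (fun y => ∑ j, n j * K l j t y) x (Pi.single l 1) := by
    rw [show (∑ j, n j * ∑ l, fderiv ℝ (K l j t) x (Pi.single l 1))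
        = ∑ j, ∑ l, n j * fderiv ℝ (K l j t) x (Pi.single l 1) from
      Finset.sum_congr rfl fun j _ => Finset.mul_sum _ _ _, Finset.sum_comm]
    exact Finset.sum_congr rfl fun l _ =>
      (fd_lin (fun j => K l j t) (fun j => n j) x _ (fun j => hKd l j x)).symm
  -- split each divergence term into normal and tangential parts
  have e4 : ∀ l, fderiv ℝ (fun y => ∑ j, n j * K l j t y) x (Pi.single l 1)
      = n l * fderiv ℝ (fun y => ∑ j, n j * K l j t y) x n
        + fderiv ℝ (fun y => ∑ j, n j * K l j t y) x (vt n l) :=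
    fun l => fd_decomp hn _ x l
  -- the row contraction splits as n l * N + M l
  have hsplit : ∀ l, (fun y => ∑ j, n j * K l j t y)
      = fun y => n l * (∑ i, ∑ j, (n i * n j) * K i j t y)
        + ∑ i, ∑ j, n i * tau n j l * K i j t y := by
    intro l
    funext y
    have : n l * (∑ i, ∑ j, (n i * n j) * K i j t y)
        + ∑ i, ∑ j, n i * tau n j l * K i j t y = ∑ j, n j * K l j t y := by
      calc n l * (∑ i, ∑ j, (n i * n j) * K i j t y)
            + ∑ i, ∑ j, n i * tau n j l * K i j t y
          = ∑ i, (n l * (∑ j, (n i * n j) * K i j t y)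
              + ∑ j, n i * tau n j l * K i j t y) := by
            rw [Finset.mul_sum, ← Finset.sum_add_distrib]
        _ = ∑ i, n i * K l i t y := Finset.sum_congr rfl fun i _ => by
            rw [Finset.mul_sum, ← Finset.sum_add_distrib,
              Finset.sum_congr rfl fun j _ => show
                n l * ((n i * n j) * K i j t y) + n i * tau n j l * K i j t y
                  = if j = l then n i * K i j t y else 0 from by unfold tau; split <;> ring,
              Finset.sum_ite_eq' Finset.univ l (fun j => n i * K i j t y)]
            simp [hK_symm i l]
        _ = ∑ j, n j * K l j t y := rfl
    exact this.symm
  -- normal part reassembles to Dn N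
  have e6a : ∑ l, n l * fderiv ℝ (fun y => ∑ j, n j * K l j t y) x n
      = fderiv ℝ (fun y => ∑ i, ∑ j, (n i * n j) * K i j t y) x n := by
    calc ∑ l, n l * fderiv ℝ (fun y => ∑ j, n j * K l j t y) x n
        = fderiv ℝ (fun y => ∑ l, n l * ∑ j, n j * K l j t y) x n :=
          (fd_lin (fun l => fun y => ∑ j, n j * K l j t y) (fun l => n l) x n
            (fun l => DifferentiableAt.fun_sum fun j _ => (hKd l j x).const_mul _)).symm
      _ = fderiv ℝ (fun y => ∑ i, ∑ j, (n i * n j) * K i j t y) x n := by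
          rw [show (fun y : V3 => ∑ l, n l * ∑ j, n j * K l j t y)
              = (fun y : V3 => ∑ i, ∑ j, (n i * n j) * K i j t y) from funext fun y => by
            rw [Finset.sum_congr rfl fun l (_ : l ∈ Finset.univ) =>
              Finset.mul_sum Finset.univ (fun j => n j * K l j t y) (n l)]
            exact Finset.sum_congr rfl fun i _ => Finset.sum_congr rfl fun j _ => by ring]
  -- tangential parts vanish
  have e6b : ∀ l, fderiv ℝ (fun y => ∑ j, n j * K l j t y) x (vt n l)
      = n l * fderiv ℝ (fun y => ∑ i, ∑ j, (n i * n j) * K i j t y) x (vt n l)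
        + fderiv ℝ (fun y => ∑ i, ∑ j, n i * tau n j l * K i j t y) x (vt n l) := by
    intro l
    rw [hsplit l]
    exact fd_mul_add _ _ _ x _ (DifferentiableAt.fun_sum fun i _ =>
        DifferentiableAt.fun_sum fun j _ => (hKd i j x).const_mul _)
      (DifferentiableAt.fun_sum fun i _ =>
        DifferentiableAt.fun_sum fun j _ => (hKd i j x).const_mul _)
  have e6c : ∑ l, n l * fderiv ℝ (fun y => ∑ i, ∑ j, (n i * n j) * K i j t y) x (vt n l)
      = 0 := by
    rw [← fd_apply_sum _ x (fun l => n l) (vt n), sum_nsmul_vt n hn, map_zero]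
  have e6d : ∀ l, fderiv ℝ (fun y => ∑ i, ∑ j, n i * tau n j l * K i j t y) x (vt n l)
      = 0 := by
    intro l
    exact tan_deriv_zero n c F hF_plane hF_relopen _ x hx
      (DifferentiableAt.fun_sum fun i _ =>
        DifferentiableAt.fun_sum fun j _ => (hKd i j x).const_mul _)
      (fun y hy => bc1 t y hy l) (vt n l) (vt_tangent n hn l)
  -- trace term splits
  have e7 : fderiv ℝ (fun y => ∑ l, K l l t y) x n
      = fderiv ℝ (fun y => ∑ i, ∑ j, (n i * n j) * K i j t y) x n
        + fderiv ℝ (fun y => ∑ i, ∑ j, tau n i j * K i j t y) x n := by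
    rw [show (fun y : V3 => ∑ l, K l l t y)
        = fun y => (∑ i, ∑ j, (n i * n j) * K i j t y)
          + ∑ i, ∑ j, tau n i j * K i j t y from ?_]
    · rw [fderiv_fun_add (DifferentiableAt.fun_sum fun i _ =>
          DifferentiableAt.fun_sum fun j _ => (hKd i j x).const_mul _)
        (DifferentiableAt.fun_sum fun i _ =>
          DifferentiableAt.fun_sum fun j _ => (hKd i j x).const_mul _)]
      rfl
    · funext y
      have : (∑ i, ∑ j, (n i * n j) * K i j t y) + ∑ i, ∑ j, tau n i j * K i j t y
          = ∑ l, K l l t y := by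
        calc (∑ i, ∑ j, (n i * n j) * K i j t y) + ∑ i, ∑ j, tau n i j * K i j t y
            = ∑ i, ((∑ j, (n i * n j) * K i j t y) + ∑ j, tau n i j * K i j t y) := by
              rw [← Finset.sum_add_distrib]
          _ = ∑ i, K i i t y := Finset.sum_congr rfl fun i _ => by
              rw [← Finset.sum_add_distrib,
                Finset.sum_congr rfl fun j _ => show
                  (n i * n j) * K i j t y + tau n i j * K i j t y
                    = if i = j then K i j t y else 0 from by unfold tau; split <;> ring,
                Finset.sum_ite_eq Finset.univ i (fun j => K i j t y)]
              simp
      exact this.symm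
  -- assemble
  have e2 : ∑ j, n j * fderiv ℝ (fun y => ∑ l, K l l t y) x (Pi.single j 1)
      = fderiv ℝ (fun y => ∑ l, K l l t y) x n := (fd_n_expand _ x n).symm
  rw [e1, e2, e3, Finset.sum_congr rfl fun l _ => e4 l, Finset.sum_add_distrib, e6a,
    Finset.sum_congr rfl fun l _ => e6b l, Finset.sum_add_distrib, e6c,
    Finset.sum_congr rfl fun l _ => e6d l, e7]
  simp only [Finset.sum_const_zero, add_zero]
  rw [key1 (n := n) hΩ hU hF_bd hFU hK_smooth hf_smooth hFev
    (fun i j => tau n i j) t x hx]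
  rw [show (fun s => ∑ k, ∑ i, ∑ j, (n k * tau n i j) * f k i j s x) = fun _ : ℝ => (0:ℝ)
    from funext fun s => bc3_trace (f := f) hn bc3 s x hx]
  simp
end main2
section main3
variable {Ω U F : Set V3} {n : V3} {c : ℝ}
  {K : Fin 3 → Fin 3 → ℝ → V3 → ℝ} {f : Fin 3 → Fin 3 → Fin 3 → ℝ → V3 → ℝ}

/-- Laplacian decomposition into normal and tangential second derivatives. -/
lemma lap_decomp (hn : ∑ i, n i ^ 2 = 1) (u : V3 → ℝ) (hu : ContDiff ℝ (⊤ : ℕ∞) u) (x : V3) :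
    fderiv ℝ (fun y => fderiv ℝ u y n) x n
      = (∑ a, fderiv ℝ (fun y => fderiv ℝ u y (Pi.single a 1)) x (Pi.single a 1))
        - ∑ a, fderiv ℝ (fun y => fderiv ℝ u y (vt n a)) x (vt n a) := by
  have hDd : ∀ w : V3, DifferentiableAt ℝ (fun y => fderiv ℝ u y w) x :=
    fun w => (contDiff_fd u hu w).differentiable (by simp) x
  have h1 : ∀ a, fderiv ℝ (fun y => fderiv ℝ u y (Pi.single a 1)) x (Pi.single a 1)
      = n a * fderiv ℝ (fun y => fderiv ℝ u y (Pi.single a 1)) x n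
        + (n a * fderiv ℝ (fun y => fderiv ℝ u y n) x (vt n a)
            + fderiv ℝ (fun y => fderiv ℝ u y (vt n a)) x (vt n a)) := by
    intro a
    rw [fd_decomp hn _ x a]
    congr 1
    rw [show (fun y => fderiv ℝ u y (Pi.single a 1))
        = fun y => n a * fderiv ℝ u y n + fderiv ℝ u y (vt n a) from
      funext fun y => fd_decomp hn u y a]
    exact fd_mul_add _ _ _ x _ ((contDiff_fd u hu n).differentiable (by simp) x)
      ((contDiff_fd u hu (vt n a)).differentiable (by simp) x)
  rw [Finset.sum_congr rfl fun a _ => h1 a, Finset.sum_add_distrib, Finset.sum_add_distrib]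
  have h2 : ∑ a, n a * fderiv ℝ (fun y => fderiv ℝ u y (Pi.single a 1)) x n
      = fderiv ℝ (fun y => fderiv ℝ u y n) x n := by
    calc ∑ a, n a * fderiv ℝ (fun y => fderiv ℝ u y (Pi.single a 1)) x n
        = fderiv ℝ (fun y => ∑ a, n a * fderiv ℝ u y (Pi.single a 1)) x n :=
          (fd_lin (fun a => fun y => fderiv ℝ u y (Pi.single a 1)) (fun a => n a) x n
            (fun a => hDd _)).symm
      _ = fderiv ℝ (fun y => fderiv ℝ u y n) x n := by
          rw [show (fun y => ∑ a, n a * fderiv ℝ u y (Pi.single a 1))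
              = fun y => fderiv ℝ u y n from funext fun y => (fd_n_expand u y n).symm]
  have h3 : ∑ a, n a * fderiv ℝ (fun y => fderiv ℝ u y n) x (vt n a) = 0 := by
    rw [← fd_apply_sum _ x (fun a => n a) (vt n), sum_nsmul_vt n hn, map_zero]
  rw [h2, h3]
  ring

/-- `Dn` of the trace of `K` vanishes on `F`. -/
lemma DnTrk_zero (hΩ : IsOpen Ω) (hU : IsOpen U) (hn : ∑ i, n i ^ 2 = 1)
    (hF_bd : F ⊆ frontier Ω) (hFU : F ⊆ U)
    (hK_smooth : ∀ i j, SmoothT (K i j)) (hf_smooth : ∀ k i j, SmoothT (f k i j))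
    (hFev : ∀ k i j t, ∀ x ∈ U ∩ Ω, dt (f k i j) t x = -pd k (K i j t) x)
    (bc2 : ∀ t, ∀ x ∈ F, ∑ k, ∑ i, ∑ j, n k * n i * n j * f k i j t x = 0)
    (bc3 : ∀ t, ∀ x ∈ F, ∀ l m,
      ∑ k, ∑ i, ∑ j, n k * tau n i l * tau n j m * f k i j t x = 0) :
    ∀ t, ∀ y ∈ F, fderiv ℝ (fun y' => ∑ l, K l l t y') y n = 0 := by
  intro t y hy
  have hKd : ∀ a b z, DifferentiableAt ℝ (K a b t) z :=
    fun a b z => ((hK_smooth a b).slice t).differentiable (by simp) z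
  have e7 : (fun y' : V3 => ∑ l, K l l t y')
      = fun y' => (∑ i, ∑ j, (n i * n j) * K i j t y')
        + ∑ i, ∑ j, tau n i j * K i j t y' := by
    funext z
    have : (∑ i, ∑ j, (n i * n j) * K i j t z) + ∑ i, ∑ j, tau n i j * K i j t z
        = ∑ l, K l l t z := by
      calc (∑ i, ∑ j, (n i * n j) * K i j t z) + ∑ i, ∑ j, tau n i j * K i j t z
          = ∑ i, ((∑ j, (n i * n j) * K i j t z) + ∑ j, tau n i j * K i j t z) := by
            rw [← Finset.sum_add_distrib]
        _ = ∑ i, K i i t z := Finset.sum_congr rfl fun i _ => by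
            rw [← Finset.sum_add_distrib,
              Finset.sum_congr rfl fun j _ => show
                (n i * n j) * K i j t z + tau n i j * K i j t z
                  = if i = j then K i j t z else 0 from by unfold tau; split <;> ring,
              Finset.sum_ite_eq Finset.univ i (fun j => K i j t z)]
            simp
    exact this.symm
  rw [e7, fderiv_fun_add (DifferentiableAt.fun_sum fun i _ =>
      DifferentiableAt.fun_sum fun j _ => (hKd i j y).const_mul _)
    (DifferentiableAt.fun_sum fun i _ =>
      DifferentiableAt.fun_sum fun j _ => (hKd i j y).const_mul _)]
  rw [ContinuousLinearMap.add_apply]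
  have hN : fderiv ℝ (fun y' => ∑ i, ∑ j, (n i * n j) * K i j t y') y n = 0 := by
    rw [key1 (n := n) hΩ hU hF_bd hFU hK_smooth hf_smooth hFev (fun i j => n i * n j) t y hy]
    rw [show (fun s => ∑ k, ∑ i, ∑ j, (n k * (n i * n j)) * f k i j s y) = fun _ : ℝ => (0:ℝ)
      from funext fun s => by
        rw [Finset.sum_congr rfl fun k _ => Finset.sum_congr rfl fun i _ =>
          Finset.sum_congr rfl fun j _ => show (n k * (n i * n j)) * f k i j s y
            = n k * n i * n j * f k i j s y from by ring]
        exact bc2 s y hy]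
    simp
  have hT : fderiv ℝ (fun y' => ∑ i, ∑ j, tau n i j * K i j t y') y n = 0 := by
    rw [key1 (n := n) hΩ hU hF_bd hFU hK_smooth hf_smooth hFev (fun i j => tau n i j) t y hy]
    rw [show (fun s => ∑ k, ∑ i, ∑ j, (n k * tau n i j) * f k i j s y) = fun _ : ℝ => (0:ℝ)
      from funext fun s => bc3_trace (f := f) hn bc3 s y hy]
    simp
  rw [hN, hT]
  ring
end main3
lemma fd_neg (g : V3 → ℝ) (x w : V3) :
    fderiv ℝ (fun y => -(g y)) x w = -(fderiv ℝ g x w) := by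
  rw [fderiv_fun_neg]; rfl

section main4
variable {Ω U F : Set V3} {n : V3} {c : ℝ}
  {K : Fin 3 → Fin 3 → ℝ → V3 → ℝ} {f : Fin 3 → Fin 3 → Fin 3 → ℝ → V3 → ℝ}

/-- Claim 2: tangential part of the normal derivative of `C` vanishes on `F`. -/
lemma claim2 (hΩ : IsOpen Ω) (hU : IsOpen U) (hn : ∑ i, n i ^ 2 = 1)
    (hF_plane : ∀ x ∈ F, ∑ i, n i * x i = c)
    (hF_bd : F ⊆ frontier Ω)
    (hF_relopen : ∀ x ∈ F, ∃ ε > 0, ∀ y, (∑ i, n i * y i = c) → dist y x < ε → y ∈ F)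
    (hFU : F ⊆ U)
    (hK_smooth : ∀ i j, SmoothT (K i j)) (hf_smooth : ∀ k i j, SmoothT (f k i j))
    (hKev : ∀ i j t, ∀ x ∈ U ∩ Ω, dt (K i j) t x = -(∑ k, pd k (f k i j t) x))
    (hFev : ∀ k i j t, ∀ x ∈ U ∩ Ω, dt (f k i j) t x = -pd k (K i j t) x)
    (bc1 : ∀ t, ∀ x ∈ F, ∀ m, ∑ i, ∑ j, n i * tau n j m * K i j t x = 0)
    (bc2 : ∀ t, ∀ x ∈ F, ∑ k, ∑ i, ∑ j, n k * n i * n j * f k i j t x = 0)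
    (bc3 : ∀ t, ∀ x ∈ F, ∀ l m,
      ∑ k, ∑ i, ∑ j, n k * tau n i l * tau n j m * f k i j t x = 0) :
    ∀ t, ∀ x ∈ F, ∀ p, ∑ j, tau n j p * fderiv ℝ (Cmom K j t) x n = 0 := by
  intro t x hx p
  have hKc : ∀ a b (t' : ℝ), ContDiff ℝ (⊤ : ℕ∞) (K a b t') := fun a b t' => (hK_smooth a b).slice t'
  have hKd : ∀ a b (t' : ℝ) z, DifferentiableAt ℝ (K a b t') z :=
    fun a b t' z => (hKc a b t').differentiable (by simp) z
  have htrk : ContDiff ℝ (⊤ : ℕ∞) (fun y' : V3 => ∑ l, K l l t y') := by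
    apply ContDiff.sum; intro l _; exact hKc l l t
  have hHT : ∀ l, SmoothT (fun s y => ∑ k, ∑ j, (n k * tau n j p) * f k l j s y) :=
    fun l => smoothT_sum2 (fun a b => f a l b) (fun a b => hf_smooth a l b)
      (fun a b => n a * tau n b p)
  have hWH : SmoothT (fun s y => ∑ a, n a * ∑ k, ∑ j, (n k * tau n j p) * f k a j s y) :=
    smoothT_sum1 (fun a => fun s y => ∑ k, ∑ j, (n k * tau n j p) * f k a j s y) hHT n
  have hMp : ∀ t' : ℝ, ContDiff ℝ (⊤ : ℕ∞) (fun y' => ∑ i, ∑ j, n i * tau n j p * K i j t' y') := by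
    intro t'; apply ContDiff.sum; intro i _; apply ContDiff.sum; intro j _
    exact contDiff_const.mul (hKc i j t')
  have hMpT : SmoothT (fun r y => ∑ i, ∑ j, n i * tau n j p * K i j r y) :=
    smoothT_sum2 K hK_smooth (fun i j => n i * tau n j p)
  -- split Cmom
  have key2 : ∀ j, fderiv ℝ (Cmom K j t) x n
      = (∑ l, fderiv ℝ (fun y => fderiv ℝ (K l j t) y n) x (Pi.single l 1))
        - fderiv ℝ (fun y => fderiv ℝ (fun y' => ∑ l, K l l t y') y n) x (Pi.single j 1) := by
    intro j
    have hCm : Cmom K j t = fun y => (∑ l, fderiv ℝ (K l j t) y (Pi.single l 1))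
        - fderiv ℝ (fun y' : V3 => ∑ l, K l l t y') y (Pi.single j 1) := rfl
    rw [hCm, fderiv_fun_sub
      (DifferentiableAt.fun_sum fun l _ =>
        (contDiff_fd _ (hKc l j t) _).differentiable (by simp) x)
      ((contDiff_fd _ htrk _).differentiable (by simp) x),
      ContinuousLinearMap.sub_apply,
      fderiv_fun_sum (fun l _ => (contDiff_fd _ (hKc l j t) _).differentiable (by simp) x),
      ContinuousLinearMap.sum_apply]
    congr 1
    · exact Finset.sum_congr rfl fun l _ => fd_swap (K l j t) (hKc l j t) x n (Pi.single l 1)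
    · exact fd_swap (fun y' : V3 => ∑ l, K l l t y') htrk x n (Pi.single j 1)
  -- the B-part vanishes
  have hB : ∑ j, tau n j p
      * fderiv ℝ (fun y => fderiv ℝ (fun y' : V3 => ∑ l, K l l t y') y n) x (Pi.single j 1)
      = 0 := by
    calc ∑ j, tau n j p
        * fderiv ℝ (fun y => fderiv ℝ (fun y' : V3 => ∑ l, K l l t y') y n) x (Pi.single j 1)
        = fderiv ℝ (fun y => fderiv ℝ (fun y' : V3 => ∑ l, K l l t y') y n) x
            (fun b => tau n b p) := by
          rw [← sum_tau_smul_e n p]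
          exact (fd_apply_sum _ x (fun j => tau n j p) (fun j => Pi.single j 1)).symm
      _ = 0 := tan_deriv_zero n c F hF_plane hF_relopen _ x hx
          ((contDiff_fd _ htrk n).differentiable (by simp) x)
          (fun y hy => DnTrk_zero hΩ hU hn hF_bd hFU hK_smooth hf_smooth hFev bc2 bc3 t y hy)
          _ (tansum hn p)
  -- the A-part
  have hA1 : ∑ j, tau n j p
      * ∑ l, fderiv ℝ (fun y => fderiv ℝ (K l j t) y n) x (Pi.single l 1)
      = ∑ l, fderiv ℝ (fun y => ∑ j, tau n j p * fderiv ℝ (K l j t) y n) x (Pi.single l 1) := by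
    calc ∑ j, tau n j p * ∑ l, fderiv ℝ (fun y => fderiv ℝ (K l j t) y n) x (Pi.single l 1)
        = ∑ j, ∑ l, tau n j p * fderiv ℝ (fun y => fderiv ℝ (K l j t) y n) x (Pi.single l 1) :=
          Finset.sum_congr rfl fun j _ => Finset.mul_sum _ _ _
      _ = ∑ l, ∑ j, tau n j p * fderiv ℝ (fun y => fderiv ℝ (K l j t) y n) x (Pi.single l 1) :=
          Finset.sum_comm
      _ = ∑ l, fderiv ℝ (fun y => ∑ j, tau n j p * fderiv ℝ (K l j t) y n) x (Pi.single l 1) :=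
          Finset.sum_congr rfl fun l _ =>
            (fd_lin (fun j => fun y => fderiv ℝ (K l j t) y n) (fun j => tau n j p) x _
              (fun j => (contDiff_fd _ (hKc l j t) n).differentiable (by simp) x)).symm
  have hA2 : ∀ l, fderiv ℝ (fun y => ∑ j, tau n j p * fderiv ℝ (K l j t) y n) x (Pi.single l 1)
      = -fderiv ℝ (fun y => deriv (fun s => ∑ k, ∑ j, (n k * tau n j p) * f k l j s y) t) x
          (Pi.single l 1) := by
    intro l
    have hreg : ∀ y ∈ U ∩ Ω, (∑ j, tau n j p * fderiv ℝ (K l j t) y n)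
        = -(deriv (fun s => ∑ k, ∑ j, (n k * tau n j p) * f k l j s y) t) := by
      intro y hy
      have hd1 : deriv (fun s => ∑ k, ∑ j, (n k * tau n j p) * f k l j s y) t
          = ∑ k, ∑ j, (n k * tau n j p) * deriv (fun s => f k l j s y) t :=
        deriv_lin2 (fun k j => fun s => f k l j s y) _ t
          (fun k j => (hf_smooth k l j).diffT y t)
      rw [hd1, Finset.sum_congr rfl fun k _ => Finset.sum_congr rfl fun j _ => show
          (n k * tau n j p) * deriv (fun s => f k l j s y) t
            = -((n k * tau n j p) * fderiv ℝ (K l j t) y (Pi.single k 1)) from by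
        rw [show deriv (fun s => f k l j s y) t
            = -(fderiv ℝ (K l j t) y (Pi.single k 1)) from hFev k l j t y hy]
        ring]
      simp only [Finset.sum_neg_distrib, neg_neg]
      calc ∑ j, tau n j p * fderiv ℝ (K l j t) y n
          = ∑ j, ∑ k, (n k * tau n j p) * fderiv ℝ (K l j t) y (Pi.single k 1) :=
            Finset.sum_congr rfl fun j _ => by
              rw [fd_n_expand (K l j t) y n, Finset.mul_sum]
              exact Finset.sum_congr rfl fun k _ => by ring
        _ = ∑ k, ∑ j, (n k * tau n j p) * fderiv ℝ (K l j t) y (Pi.single k 1) :=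
            Finset.sum_comm
    have hs1 : ContDiff ℝ (⊤ : ℕ∞) (fun y => ∑ j, tau n j p * fderiv ℝ (K l j t) y n) := by
      apply ContDiff.sum; intro j _; exact contDiff_const.mul (contDiff_fd _ (hKc l j t) n)
    have hs2 : ContDiff ℝ (⊤ : ℕ∞)
        (fun y => -(deriv (fun s => ∑ k, ∑ j, (n k * tau n j p) * f k l j s y) t)) :=
      ((hHT l).contDiff_dt t).neg
    rw [fderiv_ext Ω U hΩ hU F hF_bd hFU _ _ hs1 hs2 hreg (Pi.single l 1) x hx, fd_neg]
  have hA3 : ∀ l, fderiv ℝ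
        (fun y => deriv (fun s => ∑ k, ∑ j, (n k * tau n j p) * f k l j s y) t) x
        (Pi.single l 1)
      = deriv (fun s => fderiv ℝ (fun y => ∑ k, ∑ j, (n k * tau n j p) * f k l j s y) x
          (Pi.single l 1)) t :=
    fun l => ((hHT l).swap t x (Pi.single l 1)).symm
  have hΨ : ∀ s : ℝ, ∑ l, fderiv ℝ (fun y => ∑ k, ∑ j, (n k * tau n j p) * f k l j s y) x
        (Pi.single l 1)
      = fderiv ℝ (fun y => ∑ a, n a * ∑ k, ∑ j, (n k * tau n j p) * f k a j s y) x n := by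
    intro s
    have hHTd : ∀ a z, DifferentiableAt ℝ
        (fun y => ∑ k, ∑ j, (n k * tau n j p) * f k a j s y) z :=
      fun a z => (((hHT a).slice s).differentiable (by simp)) z
    have hsplit : ∀ l, (fun y => ∑ k, ∑ j, (n k * tau n j p) * f k l j s y)
        = fun y => n l * (∑ a, n a * ∑ k, ∑ j, (n k * tau n j p) * f k a j s y)
          + ∑ a, tau n l a * ∑ k, ∑ j, (n k * tau n j p) * f k a j s y := by
      intro l
      funext y
      have : n l * (∑ a, n a * ∑ k, ∑ j, (n k * tau n j p) * f k a j s y)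
          + ∑ a, tau n l a * ∑ k, ∑ j, (n k * tau n j p) * f k a j s y
          = ∑ k, ∑ j, (n k * tau n j p) * f k l j s y := by
        calc n l * (∑ a, n a * ∑ k, ∑ j, (n k * tau n j p) * f k a j s y)
              + ∑ a, tau n l a * ∑ k, ∑ j, (n k * tau n j p) * f k a j s y
            = ∑ a, (n l * (n a * ∑ k, ∑ j, (n k * tau n j p) * f k a j s y)
                + tau n l a * ∑ k, ∑ j, (n k * tau n j p) * f k a j s y) := by
              rw [Finset.mul_sum, ← Finset.sum_add_distrib]
          _ = ∑ a, (if l = a then (∑ k, ∑ j, (n k * tau n j p) * f k a j s y) else 0) :=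
              Finset.sum_congr rfl fun a _ => by unfold tau; split <;> ring
          _ = ∑ k, ∑ j, (n k * tau n j p) * f k l j s y := by
              rw [Finset.sum_ite_eq Finset.univ l
                (fun a => ∑ k, ∑ j, (n k * tau n j p) * f k a j s y)]
              simp
      exact this.symm
    calc ∑ l, fderiv ℝ (fun y => ∑ k, ∑ j, (n k * tau n j p) * f k l j s y) x (Pi.single l 1)
        = ∑ l, (n l * fderiv ℝ (fun y => ∑ k, ∑ j, (n k * tau n j p) * f k l j s y) x n
            + fderiv ℝ (fun y => ∑ k, ∑ j, (n k * tau n j p) * f k l j s y) x (vt n l)) :=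
          Finset.sum_congr rfl fun l _ => fd_decomp hn _ x l
      _ = (∑ l, n l * fderiv ℝ (fun y => ∑ k, ∑ j, (n k * tau n j p) * f k l j s y) x n)
          + ∑ l, fderiv ℝ (fun y => ∑ k, ∑ j, (n k * tau n j p) * f k l j s y) x (vt n l) :=
          Finset.sum_add_distrib
      _ = fderiv ℝ (fun y => ∑ a, n a * ∑ k, ∑ j, (n k * tau n j p) * f k a j s y) x n + 0 := by
          congr 1
          · exact (fd_lin (fun a => fun y => ∑ k, ∑ j, (n k * tau n j p) * f k a j s y)
              (fun a => n a) x n (fun a => hHTd a x)).symm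
          · have hterm : ∀ l, fderiv ℝ
                (fun y => ∑ k, ∑ j, (n k * tau n j p) * f k l j s y) x (vt n l)
                = n l * fderiv ℝ
                    (fun y => ∑ a, n a * ∑ k, ∑ j, (n k * tau n j p) * f k a j s y) x (vt n l)
                  + fderiv ℝ
                    (fun y => ∑ a, tau n l a * ∑ k, ∑ j, (n k * tau n j p) * f k a j s y) x
                    (vt n l) := by
              intro l
              rw [hsplit l]
              exact fd_mul_add _ _ _ x _
                (DifferentiableAt.fun_sum fun a _ => (hHTd a x).const_mul _)
                (DifferentiableAt.fun_sum fun a _ => (hHTd a x).const_mul _)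
            rw [Finset.sum_congr rfl fun l _ => hterm l, Finset.sum_add_distrib]
            have hz1 : ∑ l, n l * fderiv ℝ
                (fun y => ∑ a, n a * ∑ k, ∑ j, (n k * tau n j p) * f k a j s y) x (vt n l)
                = 0 := by
              rw [← fd_apply_sum _ x (fun l => n l) (vt n), sum_nsmul_vt n hn, map_zero]
            have hz2 : ∀ l, fderiv ℝ
                (fun y => ∑ a, tau n l a * ∑ k, ∑ j, (n k * tau n j p) * f k a j s y) x
                (vt n l) = 0 := by
              intro l
              refine tan_deriv_zero n c F hF_plane hF_relopen _ x hx
                (DifferentiableAt.fun_sum fun a _ => (hHTd a x).const_mul _)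
                (fun y hy => ?_) (vt n l) (vt_tangent n hn l)
              calc ∑ a, tau n l a * ∑ k, ∑ j, (n k * tau n j p) * f k a j s y
                  = ∑ a, ∑ k, ∑ j, n k * tau n a l * tau n j p * f k a j s y :=
                    Finset.sum_congr rfl fun a _ => by
                      rw [Finset.mul_sum]
                      refine Finset.sum_congr rfl fun k _ => ?_
                      rw [Finset.mul_sum]
                      refine Finset.sum_congr rfl fun j _ => ?_
                      rw [tau_symm n l a]; ring
                _ = ∑ k, ∑ a, ∑ j, n k * tau n a l * tau n j p * f k a j s y := Finset.sum_comm
                _ = 0 := bc3 s y hy l p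
            rw [hz1, Finset.sum_congr rfl fun l _ => hz2 l]
            simp
      _ = fderiv ℝ (fun y => ∑ a, n a * ∑ k, ∑ j, (n k * tau n j p) * f k a j s y) x n := by
          ring
  have hA4 : ∑ l, deriv (fun s => fderiv ℝ
        (fun y => ∑ k, ∑ j, (n k * tau n j p) * f k l j s y) x (Pi.single l 1)) t
      = deriv (fun s => fderiv ℝ
          (fun y => ∑ a, n a * ∑ k, ∑ j, (n k * tau n j p) * f k a j s y) x n) t := by
    calc ∑ l, deriv (fun s => fderiv ℝ
          (fun y => ∑ k, ∑ j, (n k * tau n j p) * f k l j s y) x (Pi.single l 1)) t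
        = deriv (fun s => ∑ l, fderiv ℝ
            (fun y => ∑ k, ∑ j, (n k * tau n j p) * f k l j s y) x (Pi.single l 1)) t :=
          (deriv_fun_sum (fun l _ => ((hHT l).diff_fd_t x (Pi.single l 1)) t)).symm
      _ = deriv (fun s => fderiv ℝ
            (fun y => ∑ a, n a * ∑ k, ∑ j, (n k * tau n j p) * f k a j s y) x n) t := by
          rw [show (fun s => ∑ l, fderiv ℝ
              (fun y => ∑ k, ∑ j, (n k * tau n j p) * f k l j s y) x (Pi.single l 1))
              = (fun s => fderiv ℝ
                  (fun y => ∑ a, n a * ∑ k, ∑ j, (n k * tau n j p) * f k a j s y) x n)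
            from funext fun s => hΨ s]
  have hA6 : deriv (fun s => fderiv ℝ
        (fun y => ∑ a, n a * ∑ k, ∑ j, (n k * tau n j p) * f k a j s y) x n) t
      = fderiv ℝ (fun y => deriv
          (fun s => ∑ a, n a * ∑ k, ∑ j, (n k * tau n j p) * f k a j s y) t) x n :=
    hWH.swap t x n
  have hA7 : fderiv ℝ (fun y => deriv
        (fun s => ∑ a, n a * ∑ k, ∑ j, (n k * tau n j p) * f k a j s y) t) x n
      = -fderiv ℝ (fun y => fderiv ℝ
          (fun y' => ∑ i, ∑ j, n i * tau n j p * K i j t y') y n) x n := by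
    have hreg2 : ∀ y ∈ U ∩ Ω, deriv
        (fun s => ∑ a, n a * ∑ k, ∑ j, (n k * tau n j p) * f k a j s y) t
        = -(fderiv ℝ (fun y' => ∑ i, ∑ j, n i * tau n j p * K i j t y') y n) := by
      intro y hy
      have hd2 : ∀ a, deriv (fun s => ∑ k, ∑ j, (n k * tau n j p) * f k a j s y) t
          = -(∑ k, ∑ j, (n k * tau n j p) * fderiv ℝ (K a j t) y (Pi.single k 1)) := by
        intro a
        rw [deriv_lin2 (fun k j => fun s => f k a j s y) _ t
          (fun k j => (hf_smooth k a j).diffT y t)]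
        rw [Finset.sum_congr rfl fun k _ => Finset.sum_congr rfl fun j _ => show
            (n k * tau n j p) * deriv (fun s => f k a j s y) t
              = -((n k * tau n j p) * fderiv ℝ (K a j t) y (Pi.single k 1)) from by
          rw [show deriv (fun s => f k a j s y) t
              = -(fderiv ℝ (K a j t) y (Pi.single k 1)) from hFev k a j t y hy]
          ring]
        simp [Finset.sum_neg_distrib]
      have hrhs : fderiv ℝ (fun y' => ∑ i, ∑ j, n i * tau n j p * K i j t y') y n
          = ∑ a, ∑ j, (n a * tau n j p) * fderiv ℝ (K a j t) y n :=
        fd_lin2 (fun i j => K i j t) (fun i j => n i * tau n j p) y n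
          (fun i j => hKd i j t y)
      calc deriv (fun s => ∑ a, n a * ∑ k, ∑ j, (n k * tau n j p) * f k a j s y) t
          = ∑ a, n a * -(∑ k, ∑ j,
              (n k * tau n j p) * fderiv ℝ (K a j t) y (Pi.single k 1)) := by
            rw [deriv_lin (fun a => fun s => ∑ k, ∑ j, (n k * tau n j p) * f k a j s y)
              (fun a => n a) t (fun a => (hHT a).diffT y t)]
            exact Finset.sum_congr rfl fun a _ => congrArg (fun z => n a * z) (hd2 a)
        _ = -(∑ a, ∑ j, (n a * tau n j p) * fderiv ℝ (K a j t) y n) := by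
            rw [← Finset.sum_neg_distrib]
            refine Finset.sum_congr rfl fun a _ => ?_
            rw [Finset.sum_congr rfl fun j (_ : j ∈ Finset.univ) => show
                (n a * tau n j p) * fderiv ℝ (K a j t) y n
                  = ∑ k, n a * ((n k * tau n j p)
                      * fderiv ℝ (K a j t) y (Pi.single k 1)) from by
              rw [fd_n_expand (K a j t) y n, Finset.mul_sum]
              exact Finset.sum_congr rfl fun k _ => by ring]
            rw [Finset.sum_comm, mul_neg]
            congr 1
            rw [Finset.mul_sum]
            exact Finset.sum_congr rfl fun k _ => Finset.mul_sum _ _ _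
        _ = -(fderiv ℝ (fun y' => ∑ i, ∑ j, n i * tau n j p * K i j t y') y n) := by
            rw [hrhs]
    have hsw1 : ContDiff ℝ (⊤ : ℕ∞) (fun y => deriv
        (fun s => ∑ a, n a * ∑ k, ∑ j, (n k * tau n j p) * f k a j s y) t) :=
      hWH.contDiff_dt t
    have hsw2 : ContDiff ℝ (⊤ : ℕ∞) (fun y => -(fderiv ℝ
        (fun y' => ∑ i, ∑ j, n i * tau n j p * K i j t y') y n)) :=
      (contDiff_fd _ (hMp t) n).neg
    rw [fderiv_ext Ω U hΩ hU F hF_bd hFU _ _ hsw1 hsw2 hreg2 n x hx, fd_neg]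
  have hA8 : fderiv ℝ (fun y => fderiv ℝ
      (fun y' => ∑ i, ∑ j, n i * tau n j p * K i j t y') y n) x n = 0 := by
    rw [lap_decomp hn _ (hMp t) x]
    have hMp0 : ∀ y, y ∈ F → (∑ i, ∑ j, n i * tau n j p * K i j t y) = 0 :=
      fun y hy => bc1 t y hy p
    have htang : ∀ a, fderiv ℝ (fun y => fderiv ℝ
        (fun y' => ∑ i, ∑ j, n i * tau n j p * K i j t y') y (vt n a)) x (vt n a) = 0 := by
      intro a
      refine tan_deriv_zero n c F hF_plane hF_relopen _ x hx
        ((contDiff_fd _ (hMp t) (vt n a)).differentiable (by simp) x) (fun y hy => ?_)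
        (vt n a) (vt_tangent n hn a)
      exact tan_deriv_zero n c F hF_plane hF_relopen _ y hy
        ((hMp t).differentiable (by simp) y) hMp0 (vt n a) (vt_tangent n hn a)
    have hwave : ∑ a, fderiv ℝ (fun y => fderiv ℝ
        (fun y' => ∑ i, ∑ j, n i * tau n j p * K i j t y') y (Pi.single a 1)) x
        (Pi.single a 1) = 0 := by
      have hUO : ∀ y ∈ U ∩ Ω, (∑ a, fderiv ℝ (fun y' => fderiv ℝ
          (fun y'' => ∑ i, ∑ j, n i * tau n j p * K i j t y'') y' (Pi.single a 1)) y
          (Pi.single a 1))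
          = deriv (fun s => deriv
              (fun r => ∑ i, ∑ j, n i * tau n j p * K i j r y) s) t := by
        intro y hy
        have w1 : (fun s => deriv (fun r => ∑ i, ∑ j, n i * tau n j p * K i j r y) s)
            = fun s => -(∑ i, ∑ j, ∑ k,
                (n i * tau n j p) * fderiv ℝ (f k i j s) y (Pi.single k 1)) := by
          funext s
          calc deriv (fun r => ∑ i, ∑ j, n i * tau n j p * K i j r y) s
              = ∑ i, ∑ j, (n i * tau n j p) * deriv (fun r => K i j r y) s :=
                deriv_lin2 (fun i j => fun r => K i j r y) (fun i j => n i * tau n j p) s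
                  (fun i j => (hK_smooth i j).diffT y s)
            _ = ∑ i, ∑ j, (n i * tau n j p)
                  * -(∑ k, fderiv ℝ (f k i j s) y (Pi.single k 1)) :=
                Finset.sum_congr rfl fun i _ => Finset.sum_congr rfl fun j _ =>
                  congrArg (fun z => (n i * tau n j p) * z)
                    (show deriv (fun r => K i j r y) s
                      = -(∑ k, fderiv ℝ (f k i j s) y (Pi.single k 1)) from hKev i j s y hy)
            _ = -(∑ i, ∑ j, ∑ k,
                  (n i * tau n j p) * fderiv ℝ (f k i j s) y (Pi.single k 1)) := by
                simp only [mul_neg, Finset.mul_sum, Finset.sum_neg_distrib]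
        have w3 : ∀ i j k, deriv (fun s => fderiv ℝ (f k i j s) y (Pi.single k 1)) t
            = -(fderiv ℝ (fun y' => fderiv ℝ (K i j t) y' (Pi.single k 1)) y
                (Pi.single k 1)) := by
          intro i j k
          calc deriv (fun s => fderiv ℝ (f k i j s) y (Pi.single k 1)) t
              = fderiv ℝ (fun y' => deriv (fun s => f k i j s y') t) y (Pi.single k 1) :=
                (hf_smooth k i j).swap t y _
            _ = fderiv ℝ (fun y' => -(fderiv ℝ (K i j t) y' (Pi.single k 1))) y
                  (Pi.single k 1) := by
                have hev : (fun y' => deriv (fun s => f k i j s y') t)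
                    =ᶠ[nhds y] (fun y' => -(fderiv ℝ (K i j t) y' (Pi.single k 1))) :=
                  Filter.eventuallyEq_of_mem ((hU.inter hΩ).mem_nhds hy)
                    (fun z hz => hFev k i j t z hz)
                rw [hev.fderiv_eq]
            _ = -(fderiv ℝ (fun y' => fderiv ℝ (K i j t) y' (Pi.single k 1)) y
                  (Pi.single k 1)) := fd_neg _ y _
        calc ∑ a, fderiv ℝ (fun y' => fderiv ℝ
              (fun y'' => ∑ i, ∑ j, n i * tau n j p * K i j t y'') y' (Pi.single a 1)) y
              (Pi.single a 1)
            = ∑ a, ∑ i, ∑ j, (n i * tau n j p) * fderiv ℝ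
                (fun y' => fderiv ℝ (K i j t) y' (Pi.single a 1)) y (Pi.single a 1) := by
              refine Finset.sum_congr rfl fun a _ => ?_
              rw [show (fun y' => fderiv ℝ
                  (fun y'' => ∑ i, ∑ j, n i * tau n j p * K i j t y'') y' (Pi.single a 1))
                  = (fun y' => ∑ i, ∑ j, (n i * tau n j p)
                      * fderiv ℝ (K i j t) y' (Pi.single a 1)) from funext fun y' =>
                fd_lin2 (fun i j => K i j t) (fun i j => n i * tau n j p) y'
                  (Pi.single a 1) (fun i j => hKd i j t y')]
              exact fd_lin2 (fun i j => fun y' => fderiv ℝ (K i j t) y' (Pi.single a 1))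
                (fun i j => n i * tau n j p) y (Pi.single a 1)
                (fun i j => (contDiff_fd _ (hKc i j t) _).differentiable (by simp) y)
          _ = ∑ i, ∑ j, ∑ k, (n i * tau n j p) * fderiv ℝ
                (fun y' => fderiv ℝ (K i j t) y' (Pi.single k 1)) y (Pi.single k 1) :=
              (sum3_rot (fun i j k => (n i * tau n j p) * fderiv ℝ
                (fun y' => fderiv ℝ (K i j t) y' (Pi.single k 1)) y (Pi.single k 1))).symm
          _ = deriv (fun s => deriv
                (fun r => ∑ i, ∑ j, n i * tau n j p * K i j r y) s) t := by
              rw [w1, deriv.fun_neg]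
              rw [deriv_lin3 (fun i j k => fun s => fderiv ℝ (f k i j s) y (Pi.single k 1))
                (fun i j k => n i * tau n j p) t
                (fun i j k => ((hf_smooth k i j).diff_fd_t y (Pi.single k 1)) t)]
              rw [Finset.sum_congr rfl fun i _ => Finset.sum_congr rfl fun j _ =>
                Finset.sum_congr rfl fun k _ =>
                  congrArg (fun z => (n i * tau n j p) * z) (w3 i j k)]
              simp only [mul_neg, Finset.sum_neg_distrib, neg_neg]
      have hcu : Continuous (fun y => ∑ a, fderiv ℝ (fun y' => fderiv ℝ
          (fun y'' => ∑ i, ∑ j, n i * tau n j p * K i j t y'') y' (Pi.single a 1)) y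
          (Pi.single a 1)) := by
        apply continuous_finset_sum
        intro a _
        exact (contDiff_fd _ (contDiff_fd _ (hMp t) _) _).continuous
      have hcv : Continuous (fun y => deriv (fun s => deriv
          (fun r => ∑ i, ∑ j, n i * tau n j p * K i j r y) s) t) :=
        (hMpT.contDiff_ddt t).continuous
      rw [extend_eq Ω U hΩ hU F hF_bd hFU _ _ hcu hcv hUO x hx]
      rw [show (fun r => ∑ i, ∑ j, n i * tau n j p * K i j r x) = (fun _ : ℝ => (0:ℝ))
        from funext fun r => bc1 r x hx p]
      simp
    rw [hwave, Finset.sum_congr rfl fun a _ => htang a]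
    simp
  -- assemble
  calc ∑ j, tau n j p * fderiv ℝ (Cmom K j t) x n
      = ∑ j, tau n j p * ((∑ l, fderiv ℝ (fun y => fderiv ℝ (K l j t) y n) x
          (Pi.single l 1))
          - fderiv ℝ (fun y => fderiv ℝ (fun y' : V3 => ∑ l, K l l t y') y n) x
              (Pi.single j 1)) :=
        Finset.sum_congr rfl fun j _ => by rw [key2 j]
    _ = (∑ j, tau n j p * ∑ l, fderiv ℝ (fun y => fderiv ℝ (K l j t) y n) x
          (Pi.single l 1))
        - ∑ j, tau n j p * fderiv ℝ (fun y => fderiv ℝ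
            (fun y' : V3 => ∑ l, K l l t y') y n) x (Pi.single j 1) := by
        rw [← Finset.sum_sub_distrib]
        exact Finset.sum_congr rfl fun j _ => by ring
    _ = (∑ l, fderiv ℝ (fun y => ∑ j, tau n j p * fderiv ℝ (K l j t) y n) x
          (Pi.single l 1)) - 0 := by rw [hA1, hB]
    _ = (∑ l, -fderiv ℝ (fun y => deriv
          (fun s => ∑ k, ∑ j, (n k * tau n j p) * f k l j s y) t) x (Pi.single l 1)) - 0 :=
        by rw [Finset.sum_congr rfl fun l _ => hA2 l]
    _ = -(∑ l, deriv (fun s => fderiv ℝ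
          (fun y => ∑ k, ∑ j, (n k * tau n j p) * f k l j s y) x (Pi.single l 1)) t) - 0 := by
        rw [Finset.sum_congr rfl fun l _ => congrArg Neg.neg (hA3 l),
          ← Finset.sum_neg_distrib]
    _ = -(deriv (fun s => fderiv ℝ
          (fun y => ∑ a, n a * ∑ k, ∑ j, (n k * tau n j p) * f k a j s y) x n) t) - 0 := by
        rw [hA4]
    _ = -(fderiv ℝ (fun y => deriv
          (fun s => ∑ a, n a * ∑ k, ∑ j, (n k * tau n j p) * f k a j s y) t) x n) - 0 := by
        rw [hA6]
    _ = -(-fderiv ℝ (fun y => fderiv ℝ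
          (fun y' => ∑ i, ∑ j, n i * tau n j p * K i j t y') y n) x n) - 0 := by
        rw [hA7]
    _ = 0 := by rw [hA8]; ring
end main4
/-- boundary identity lemma: with `α = 0` and `β_i = 0`, for a smooth
solution of the homogeneous linearized EC system near a relatively open planar piece
`F` of the boundary of `Ω` with unit normal `n`, on which the boundary conditions
(set2) hold for all time, one has on `F` for all time: `n^j C_j = 0`,
`τ_j^p n^l ∂_l C^j = 0`, and consequently `(∂_t C_j)(n^l ∂_l C^j) = 0`. -/
theorem boundary_identity_lemma
    (Ω : Set (Fin 3 → ℝ)) (hΩ : IsOpen Ω)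
    (n : Fin 3 → ℝ) (hn : ∑ i, n i ^ 2 = 1) (c : ℝ)
    (F : Set (Fin 3 → ℝ))
    (hF_plane : ∀ x ∈ F, ∑ i, n i * x i = c)
    (hF_bd : F ⊆ frontier Ω)
    (hF_relopen : ∀ x ∈ F, ∃ ε > 0, ∀ y, (∑ i, n i * y i = c) → dist y x < ε → y ∈ F)
    (U : Set (Fin 3 → ℝ)) (hU : IsOpen U) (hFU : F ⊆ U)
    (g K : Fin 3 → Fin 3 → ℝ → (Fin 3 → ℝ) → ℝ)
    (f : Fin 3 → Fin 3 → Fin 3 → ℝ → (Fin 3 → ℝ) → ℝ)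
    (hg_smooth : ∀ i j, SmoothT (g i j)) (hK_smooth : ∀ i j, SmoothT (K i j))
    (hf_smooth : ∀ k i j, SmoothT (f k i j))
    (hg_symm : ∀ i j, g i j = g j i) (hK_symm : ∀ i j, K i j = K j i)
    (hf_symm : ∀ k i j, f k i j = f k j i)
    (hG : ∀ i j t, ∀ x ∈ U ∩ Ω, dt (g i j) t x = -2 * K i j t x)
    (hKev : ∀ i j t, ∀ x ∈ U ∩ Ω, dt (K i j) t x = -(∑ k, pd k (f k i j t) x))
    (hFev : ∀ k i j t, ∀ x ∈ U ∩ Ω, dt (f k i j) t x = -pd k (K i j t) x)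
    (bc1 : ∀ t, ∀ x ∈ F, ∀ m, ∑ i, ∑ j, n i * tau n j m * K i j t x = 0)
    (bc2 : ∀ t, ∀ x ∈ F, ∑ k, ∑ i, ∑ j, n k * n i * n j * f k i j t x = 0)
    (bc3 : ∀ t, ∀ x ∈ F, ∀ l m,
      ∑ k, ∑ i, ∑ j, n k * tau n i l * tau n j m * f k i j t x = 0) :
    ∀ t, ∀ x ∈ F,
      (∑ j, n j * Cmom K j t x) = 0 ∧
      (∀ p, ∑ j, tau n j p * (∑ l, n l * pd l (Cmom K j t) x) = 0) ∧
      (∑ j, deriv (fun s => Cmom K j s x) t * (∑ l, n l * pd l (Cmom K j t) x)) = 0 := by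
  intro t x hx
  have hb : ∀ (j : Fin 3) (t' : ℝ), ∑ l, n l * pd l (Cmom K j t') x
      = fderiv ℝ (Cmom K j t') x n :=
    fun j t' => (fd_n_expand (Cmom K j t') x n).symm
  have c1 : ∀ t', ∑ j, n j * Cmom K j t' x = 0 := fun t' =>
    claim1 hΩ hU hn hF_plane hF_bd hF_relopen hFU hK_smooth hf_smooth hK_symm hFev bc1 bc3
      t' x hx
  have c2 : ∀ p, ∑ j, tau n j p * fderiv ℝ (Cmom K j t) x n = 0 :=
    claim2 hΩ hU hn hF_plane hF_bd hF_relopen hFU hK_smooth hf_smooth hKev hFev bc1 bc2 bc3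
      t x hx
  have c2' : ∀ p, ∑ j, tau n j p * (∑ l, n l * pd l (Cmom K j t) x) = 0 := by
    intro p
    calc ∑ j, tau n j p * (∑ l, n l * pd l (Cmom K j t) x)
        = ∑ j, tau n j p * fderiv ℝ (Cmom K j t) x n :=
          Finset.sum_congr rfl fun j _ => congrArg (fun z => tau n j p * z) (hb j t)
      _ = 0 := c2 p
  refine ⟨c1 t, c2', ?_⟩
  have htrkT : SmoothT (fun s y => ∑ l, K l l s y) := by
    apply ContDiff.sum; intro l _; exact hK_smooth l l
  have hdiffC : ∀ j : Fin 3, DifferentiableAt ℝ (fun s => Cmom K j s x) t := by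
    intro j
    have : (fun s => Cmom K j s x) = fun s =>
        (∑ l, fderiv ℝ (K l j s) x (Pi.single l 1))
          - fderiv ℝ (fun y => ∑ l, K l l s y) x (Pi.single j 1) := rfl
    rw [this]
    exact DifferentiableAt.sub
      (DifferentiableAt.fun_sum fun l _ => ((hK_smooth l j).diff_fd_t x (Pi.single l 1)) t)
      ((htrkT.diff_fd_t x (Pi.single j 1)) t)
  have ha : ∑ j, n j * deriv (fun s => Cmom K j s x) t = 0 := by
    calc ∑ j, n j * deriv (fun s => Cmom K j s x) t
        = deriv (fun s => ∑ j, n j * Cmom K j s x) t :=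
          (deriv_lin (fun j => fun s => Cmom K j s x) (fun j => n j) t hdiffC).symm
      _ = 0 := by
          rw [show (fun s => ∑ j, n j * Cmom K j s x) = fun _ : ℝ => (0:ℝ)
            from funext fun s => c1 s]
          simp
  have key : ∑ j, deriv (fun s => Cmom K j s x) t * (∑ l, n l * pd l (Cmom K j t) x)
      = (∑ j, n j * deriv (fun s => Cmom K j s x) t)
          * (∑ j, n j * (∑ l, n l * pd l (Cmom K j t) x))
        + ∑ p, deriv (fun s => Cmom K p s x) t
            * (∑ j, tau n j p * (∑ l, n l * pd l (Cmom K j t) x)) := by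
    simp only [tau, Fin.sum_univ_three]
    norm_num [Fin.ext_iff]
    ring
  rw [key, ha, Finset.sum_congr rfl fun p _ =>
    congrArg (fun z => deriv (fun s => Cmom K p s x) t * z) (c2' p)]
  simp
end

section
/- For every unit vector n^i in ℝ³, the symmetric linear boundary operator Ã_n on the 33-dimensional space Ṽ has exactly six positive eigenvalues, twenty-one zero eigenvalues, and six negative eigenvalues, counted with multiplicity. -/
open scoped BigOperators Classical

/-- The 39-dimensional ambient space of quadruples `(g_ij, K_ij, f_kij, p_i)` of
constant tensors (no symmetry imposed). -/
abbrev Wt : Type :=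
  (Fin 3 → Fin 3 → ℝ) × (Fin 3 → Fin 3 → ℝ) × (Fin 3 → Fin 3 → Fin 3 → ℝ) × (Fin 3 → ℝ)

private lemma sum1_mul (c : ℝ) (coef w : Fin 3 → ℝ) :
    ∑ i, coef i * (c * w i) = c * ∑ i, coef i * w i := by
  simp [Finset.mul_sum, mul_left_comm]

private lemma sum2_mul (c : ℝ) (coef w : Fin 3 → Fin 3 → ℝ) :
    ∑ i, ∑ j, coef i j * (c * w i j) = c * ∑ i, ∑ j, coef i j * w i j := by
  simp [Finset.mul_sum, mul_left_comm]

private lemma sum3_mul (c : ℝ) (coef w : Fin 3 → Fin 3 → Fin 3 → ℝ) :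
    ∑ k, ∑ i, ∑ j, coef k i j * (c * w k i j)
      = c * ∑ k, ∑ i, ∑ j, coef k i j * w k i j := by
  simp [Finset.mul_sum, mul_left_comm]

/-- The 33-dimensional subspace `Ṽ` of `Wt` consisting of quadruples with `g`, `K`,
and `f` symmetric in the indices `i` and `j`. -/
def Vtsub : Submodule ℝ Wt where
  carrier := {v | (∀ i j, v.1 i j = v.1 j i) ∧ (∀ i j, v.2.1 i j = v.2.1 j i) ∧
    (∀ k i j, v.2.2.1 k i j = v.2.2.1 k j i)}
  add_mem' := by
    rintro a b ⟨a1, a2, a3⟩ ⟨b1, b2, b3⟩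
    refine ⟨fun i j => ?_, fun i j => ?_, fun k i j => ?_⟩ <;>
      simp only [Prod.fst_add, Prod.snd_add, Pi.add_apply] <;>
      [rw [a1 i j, b1 i j]; rw [a2 i j, b2 i j]; rw [a3 k i j, b3 k i j]]
  zero_mem' := ⟨fun _ _ => rfl, fun _ _ => rfl, fun _ _ _ => rfl⟩
  smul_mem' := by
    rintro c a ⟨a1, a2, a3⟩
    refine ⟨fun i j => ?_, fun i j => ?_, fun k i j => ?_⟩ <;>
      simp only [Prod.smul_fst, Prod.smul_snd, Pi.smul_apply] <;>
      [rw [a1 i j]; rw [a2 i j]; rw [a3 k i j]]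

/-- The extended boundary operator `Ã_n`:
`g̃_ij = 0`, `K̃_ij = n^k f_kij − (1/2)(n_i p_j + n_j p_i) + n^k p_k δ_ij`,
`f̃_kij = n_k K_ij`, `p̃_i = −n^l K_il + n_i K_l^l`. -/
noncomputable def bopt (n : Fin 3 → ℝ) (v : Wt) : Wt :=
  (0,
   fun i j => (∑ k, n k * v.2.2.1 k i j)
     - (1 / 2) * (n i * v.2.2.2 j + n j * v.2.2.2 i)
     + (∑ k, n k * v.2.2.2 k) * (if i = j then 1 else 0),
   fun k i j => n k * v.2.1 i j,
   fun i => -(∑ l, n l * v.2.1 i l) + n i * ∑ l, v.2.1 l l)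

/-- The inner product on `Wt` obtained by summing the componentwise products of all
entries. -/
def ipt (v w : Wt) : ℝ :=
  (∑ i, ∑ j, v.1 i j * w.1 i j) + (∑ i, ∑ j, v.2.1 i j * w.2.1 i j)
    + (∑ k, ∑ i, ∑ j, v.2.2.1 k i j * w.2.2.1 k i j) + (∑ i, v.2.2.2 i * w.2.2.2 i)

/-!
Split `Ṽ` into the `g`-block, the `K`-block and the `(f, p)`-block. `Ã_n` kills the `g`-block
and exchanges the other two: `K ↦ M K := (n ⊗ K, (tr K) n - K n)` and `(f, p) ↦ Mᵀ (f, p)`.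
So whenever `Ã_n² K = s² K` with `s > 0`, the vectors `± s K + M K` are eigenvectors with
eigenvalues `± s`. In an orthonormal frame `(n, a, b)` the symmetric matrices
`nn, ab + ba, aa - bb` (`s² = 1`), `na + an, nb + bn` (`s² = 3/2`) and `aa + bb` (`s² = 3`)
diagonalise `Ã_n²` on the `K`-block, which gives six positive and six negative eigenvalues.
The kernel contains the `g`-block (6 dimensions), the tensors `u ⊗ S` with `u ⊥ n` (12) and
three vectors with `p = n, a, b`. These 33 vectors are pairwise orthogonal, so they form a basis
because `dim Ṽ ≤ 33`.
-/

open Matrix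

lemma LinearMap.map_smul_add_self_of_map_map {R M : Type*} [CommRing R] [AddCommGroup M]
    [Module R M] (T : M →ₗ[R] M) {x : M} {s : R} (h : T (T x) = (s * s) • x) :
    T (s • x + T x) = s • (s • x + T x) := by
  rw [map_add, map_smul, h, smul_add, smul_smul, add_comm]

lemma sum_smul_smul {ι R M : Type*} [Fintype ι] [CommSemiring R] [AddCommMonoid M] [Module R M]
    (u v : ι → R) (x : M) : ∑ k, u k • v k • x = (u ⬝ᵥ v) • x := by
  simp [dotProduct, smul_smul, Finset.sum_smul]

section FrobeniusInner

variable {R ι κ : Type*} [CommSemiring R] [Fintype ι] [Fintype κ]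

def frobInner : LinearMap.BilinForm R (Matrix ι κ R) :=
  LinearMap.mk₂ R (fun A B => ∑ i, ∑ j, A i j * B i j)
    (fun A A' B => by simp [add_mul, Finset.sum_add_distrib])
    (fun c A B => by simp [Finset.mul_sum, mul_assoc])
    (fun A B B' => by simp [mul_add, Finset.sum_add_distrib])
    (fun c A B => by simp [Finset.mul_sum, mul_left_comm])

lemma frobInner_apply (A B : Matrix ι κ R) : frobInner A B = ∑ i, ∑ j, A i j * B i j := rfl

@[simp] lemma frobInner_vecMulVec (u u' : ι → R) (v v' : κ → R) :
    frobInner (vecMulVec u v) (vecMulVec u' v') = (u ⬝ᵥ u') * (v ⬝ᵥ v') := by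
  simp only [frobInner_apply, dotProduct, vecMulVec_apply, Finset.sum_mul_sum]
  exact Finset.sum_congr rfl fun i _ => Finset.sum_congr rfl fun j _ => by ring

variable [DecidableEq ι]

@[simp] lemma frobInner_vecMulVec_one (u v : ι → R) : frobInner (vecMulVec u v) 1 = u ⬝ᵥ v := by
  simp [frobInner_apply, dotProduct, vecMulVec_apply, one_apply]

@[simp] lemma frobInner_one_vecMulVec (u v : ι → R) : frobInner 1 (vecMulVec u v) = u ⬝ᵥ v := by
  simp [frobInner_apply, dotProduct, vecMulVec_apply, one_apply]

@[simp] lemma frobInner_one_one : frobInner (1 : Matrix ι ι R) 1 = Fintype.card ι := by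
  simp [frobInner_apply, one_apply]

end FrobeniusInner

lemma sum_frobInner_smul_smul {R ι κ μ : Type*} [CommSemiring R] [Fintype ι] [Fintype κ]
    [Fintype μ] (u v : μ → R) (A B : Matrix ι κ R) :
    ∑ k, frobInner (u k • A) (v k • B) = (u ⬝ᵥ v) * frobInner A B := by
  simp [dotProduct, Finset.sum_mul, mul_assoc, mul_left_comm]

structure IsOrthonormalFrame (n a b : Fin 3 → ℝ) : Prop where
  n_n : n ⬝ᵥ n = 1
  a_a : a ⬝ᵥ a = 1
  b_b : b ⬝ᵥ b = 1
  n_a : n ⬝ᵥ a = 0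
  n_b : n ⬝ᵥ b = 0
  a_b : a ⬝ᵥ b = 0

namespace IsOrthonormalFrame

variable {n a b : Fin 3 → ℝ}

lemma a_n (hF : IsOrthonormalFrame n a b) : a ⬝ᵥ n = 0 := by rw [dotProduct_comm]; exact hF.n_a
lemma b_n (hF : IsOrthonormalFrame n a b) : b ⬝ᵥ n = 0 := by rw [dotProduct_comm]; exact hF.n_b
lemma b_a (hF : IsOrthonormalFrame n a b) : b ⬝ᵥ a = 0 := by rw [dotProduct_comm]; exact hF.a_b

lemma vecMulVec_add_vecMulVec_add_vecMulVec (hF : IsOrthonormalFrame n a b) :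
    vecMulVec n n + vecMulVec a a + vecMulVec b b = 1 := by
  set R : Matrix (Fin 3) (Fin 3) ℝ := Matrix.of ![n, a, b]
  have hR : R * Rᵀ = 1 := by
    ext i j
    fin_cases i <;> fin_cases j <;>
      simp [R, mul_apply, ← dotProduct.eq_1, hF.n_n, hF.a_a, hF.b_b, hF.n_a, hF.n_b, hF.a_b,
        hF.a_n, hF.b_n, hF.b_a]
  rw [← mul_eq_one_comm.mp hR]
  ext i j
  simp [R, mul_apply, Fin.sum_univ_three, vecMulVec_apply]

end IsOrthonormalFrame

lemma exists_isOrthonormalFrame (n : Fin 3 → ℝ) (hn : n ⬝ᵥ n = 1) :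
    ∃ a b, IsOrthonormalFrame n a b := by
  have hunit : Orthonormal ℝ (({2} : Set (Fin 3)).domRestrict
      fun _ => (WithLp.toLp 2 n : EuclideanSpace ℝ (Fin 3))) := by
    rw [orthonormal_iff_ite]
    rintro ⟨i, hi⟩ ⟨j, hj⟩
    rw [Set.mem_singleton_iff] at hi hj
    subst hi hj
    simp only [Set.domRestrict_apply, if_true]
    rw [EuclideanSpace.inner_eq_star_dotProduct]
    simpa using hn
  obtain ⟨e, he⟩ := hunit.exists_orthonormalBasis_extension_of_card_eq (by simp)
  have hdot : ∀ i j, (e i).ofLp ⬝ᵥ (e j).ofLp = if i = j then 1 else 0 := fun i j => by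
    simpa [EuclideanSpace.inner_eq_star_dotProduct, dotProduct_comm] using
      orthonormal_iff_ite.mp e.orthonormal i j
  have he2 : (e 2).ofLp = n := by rw [he 2 rfl]
  refine ⟨(e 0).ofLp, (e 1).ofLp, hn, by simpa using hdot 0 0, by simpa using hdot 1 1, ?_, ?_,
    by simpa using hdot 0 1⟩
  · simpa [he2] using hdot 2 0
  · simpa [he2] using hdot 2 1

abbrev Mat3 : Type := Matrix (Fin 3) (Fin 3) ℝ

def gVec (S : Mat3) : Wt := (S, (0 : Mat3), (0 : Fin 3 → Mat3), 0)

def kVec (K : Mat3) : Wt := ((0 : Mat3), K, (0 : Fin 3 → Mat3), 0)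

def fpVec (f : Fin 3 → Mat3) (p : Fin 3 → ℝ) : Wt := ((0 : Mat3), (0 : Mat3), f, p)

@[simp] lemma kVec_zero : kVec 0 = 0 := rfl

lemma kVec_smul (c : ℝ) (K : Mat3) : kVec (c • K) = c • kVec K := by
  change (_, _, _, _) = (c • (0 : Mat3), c • K, c • (0 : Fin 3 → Mat3), c • (0 : Fin 3 → ℝ))
  simp only [smul_zero]

lemma gVec_mem {S : Mat3} (hS : S.IsSymm) : gVec S ∈ Vtsub :=
  ⟨fun i j => hS.apply j i, fun _ _ => rfl, fun _ _ _ => rfl⟩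

lemma kVec_mem {K : Mat3} (hK : K.IsSymm) : kVec K ∈ Vtsub :=
  ⟨fun _ _ => rfl, fun i j => hK.apply j i, fun _ _ _ => rfl⟩

lemma fpVec_mem {f : Fin 3 → Mat3} (hf : ∀ k, (f k).IsSymm) (p : Fin 3 → ℝ) :
    fpVec f p ∈ Vtsub :=
  ⟨fun _ _ => rfl, fun _ _ => rfl, fun k i j => (hf k).apply j i⟩

noncomputable def boptLin (n : Fin 3 → ℝ) : Wt →ₗ[ℝ] Wt where
  toFun := bopt n
  map_add' v w := by
    simp only [bopt]
    refine Prod.ext (by simp) (Prod.ext ?_ (Prod.ext ?_ ?_)) <;> ext <;>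
      simp [Fin.sum_univ_three] <;> (try split_ifs) <;> ring
  map_smul' c v := by
    simp only [bopt]
    refine Prod.ext (by simp) (Prod.ext ?_ (Prod.ext ?_ ?_)) <;> ext <;>
      simp [Fin.sum_univ_three] <;> (try split_ifs) <;> ring

lemma bopt_gVec (n : Fin 3 → ℝ) (S : Mat3) : bopt n (gVec S) = 0 := by
  simp only [bopt, gVec]
  refine Prod.ext rfl (Prod.ext ?_ (Prod.ext ?_ ?_)) <;> ext <;> simp

lemma bopt_kVec (n : Fin 3 → ℝ) (K : Mat3) :
    bopt n (kVec K) = fpVec (fun k => n k • K) (trace K • n - K *ᵥ n) := by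
  simp only [bopt, kVec, fpVec]
  refine Prod.ext rfl (Prod.ext ?_ (Prod.ext ?_ ?_)) <;> ext <;>
    simp [mulVec, dotProduct, trace, mul_comm]
  ring

lemma bopt_fpVec (n : Fin 3 → ℝ) (f : Fin 3 → Mat3) (p : Fin 3 → ℝ) :
    bopt n (fpVec f p) =
      kVec (∑ k, n k • f k - (1 / 2 : ℝ) • (vecMulVec n p + vecMulVec p n) + (n ⬝ᵥ p) • 1) := by
  simp only [bopt, kVec, fpVec]
  refine Prod.ext rfl (Prod.ext ?_ (Prod.ext ?_ ?_)) <;> ext <;>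
    simp [vecMulVec_apply, dotProduct, one_apply, Matrix.sum_apply]
  ring

lemma bopt_bopt_kVec (n : Fin 3 → ℝ) (hn : n ⬝ᵥ n = 1) (K : Mat3) :
    bopt n (bopt n (kVec K)) =
      kVec (K - (1 / 2 : ℝ) • (vecMulVec n (trace K • n - K *ᵥ n) +
          vecMulVec (trace K • n - K *ᵥ n) n) + (n ⬝ᵥ (trace K • n - K *ᵥ n)) • 1) := by
  rw [bopt_kVec, bopt_fpVec, sum_smul_smul, hn, one_smul]

def iptForm : LinearMap.BilinForm ℝ Wt :=
  LinearMap.mk₂ ℝ ipt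
    (fun v v' w => by
      simp only [ipt, Prod.fst_add, Prod.snd_add, Pi.add_apply, add_mul, Finset.sum_add_distrib]
      ring)
    (fun c v w => by
      simp only [ipt, Prod.smul_fst, Prod.smul_snd, Pi.smul_apply, smul_eq_mul, mul_assoc,
        ← Finset.mul_sum]
      ring)
    (fun v w w' => by
      simp only [ipt, Prod.fst_add, Prod.snd_add, Pi.add_apply, mul_add, Finset.sum_add_distrib]
      ring)
    (fun c v w => by
      simp only [ipt, Prod.smul_fst, Prod.smul_snd, Pi.smul_apply, smul_eq_mul,
        mul_left_comm _ c, ← Finset.mul_sum]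
      ring)

lemma iptForm_apply (v w : Wt) : iptForm v w = ipt v w := rfl

lemma iptForm_comm (v w : Wt) : iptForm v w = iptForm w v := by
  simp only [iptForm_apply, ipt, mul_comm (v.1 _ _), mul_comm (v.2.1 _ _),
    mul_comm (v.2.2.1 _ _ _), mul_comm (v.2.2.2 _)]

@[simp] lemma iptForm_gVec_gVec (S S' : Mat3) : iptForm (gVec S) (gVec S') = frobInner S S' := by
  simp [iptForm_apply, ipt, gVec, frobInner_apply]

@[simp] lemma iptForm_kVec_kVec (K K' : Mat3) : iptForm (kVec K) (kVec K') = frobInner K K' := by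
  simp [iptForm_apply, ipt, kVec, frobInner_apply]

@[simp] lemma iptForm_fpVec_fpVec (f f' : Fin 3 → Mat3) (p p' : Fin 3 → ℝ) :
    iptForm (fpVec f p) (fpVec f' p') = ∑ k, frobInner (f k) (f' k) + p ⬝ᵥ p' := by
  simp [iptForm_apply, ipt, fpVec, frobInner_apply, dotProduct]

@[simp] lemma iptForm_gVec_fpVec (S : Mat3) (f : Fin 3 → Mat3) (p : Fin 3 → ℝ) :
    iptForm (gVec S) (fpVec f p) = 0 := by
  simp [iptForm_apply, ipt, gVec, fpVec]

lemma iptForm_kVec_left (K : Mat3) (w : Wt) : iptForm (kVec K) w = frobInner K w.2.1 := by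
  simp [iptForm_apply, ipt, kVec]
  rfl

/-- Only the `K`–`p` cross terms need the symmetry of `K`. -/
lemma iptForm_bopt_comm (n : Fin 3 → ℝ) {v w : Wt} (hv : ∀ i j, v.2.1 i j = v.2.1 j i)
    (hw : ∀ i j, w.2.1 i j = w.2.1 j i) : iptForm (bopt n v) w = iptForm v (bopt n w) := by
  simp only [iptForm_apply, ipt, bopt, Fin.sum_univ_three, Pi.zero_apply, zero_mul, mul_zero]
  norm_num [Fin.ext_iff]
  linear_combination (1/2) * (n 1 * v.2.2.2 0 - n 0 * v.2.2.2 1) * hw 0 1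
    + (1/2) * (n 2 * v.2.2.2 0 - n 0 * v.2.2.2 2) * hw 0 2
    + (1/2) * (n 2 * v.2.2.2 1 - n 1 * v.2.2.2 2) * hw 1 2
    + (1/2) * (n 0 * w.2.2.2 1 - n 1 * w.2.2.2 0) * hv 0 1
    + (1/2) * (n 0 * w.2.2.2 2 - n 2 * w.2.2.2 0) * hv 0 2
    + (1/2) * (n 1 * w.2.2.2 2 - n 2 * w.2.2.2 1) * hv 1 2

lemma iptForm_smul_kVec_add_bopt_of_bopt_eq_zero (n : Fin 3 → ℝ) {K : Mat3} (hK : K.IsSymm)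
    (c : ℝ) {z : Wt} (hz : z ∈ Vtsub) (hbz : bopt n z = 0) (hzK : z.2.1 = (0 : Mat3)) :
    iptForm (c • kVec K + bopt n (kVec K)) z = 0 := by
  rw [map_add, map_smul, LinearMap.add_apply, LinearMap.smul_apply,
    iptForm_bopt_comm n (kVec_mem hK).2.1 hz.2.1, hbz, iptForm_kVec_left, hzK]
  simp

abbrev UpperIdx : Type := {p : Fin 3 × Fin 3 // p.1 ≤ p.2}

lemma card_upperIdx : Fintype.card UpperIdx = 6 := by decide

def upperCoords :
    Wt →ₗ[ℝ] (UpperIdx → ℝ) × (UpperIdx → ℝ) × (Fin 3 → UpperIdx → ℝ) × (Fin 3 → ℝ) where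
  toFun v := (fun p => v.1 p.1.1 p.1.2, fun p => v.2.1 p.1.1 p.1.2,
    fun k p => v.2.2.1 k p.1.1 p.1.2, v.2.2.2)
  map_add' _ _ := rfl
  map_smul' _ _ := rfl

lemma eq_zero_of_symm_of_upper {M : Fin 3 → Fin 3 → ℝ} (hM : ∀ i j, M i j = M j i)
    (hup : ∀ p : UpperIdx, M p.1.1 p.1.2 = 0) : M = 0 := by
  ext i j
  rcases le_total i j with h | h
  · exact hup ⟨(i, j), h⟩
  · rw [hM]
    exact hup ⟨(j, i), h⟩

lemma finrank_Vtsub_le : Module.finrank ℝ Vtsub ≤ 33 := by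
  have hinj : Function.Injective (upperCoords.comp Vtsub.subtype) := by
    rw [← LinearMap.ker_eq_bot, LinearMap.ker_eq_bot']
    rintro ⟨⟨g, K, f, p⟩, hg, hK, hf⟩ hv
    simp only [LinearMap.comp_apply, Submodule.subtype_apply, upperCoords, LinearMap.coe_mk,
      AddHom.coe_mk, Prod.mk_eq_zero, funext_iff, Pi.zero_apply] at hv
    obtain ⟨hg0, hK0, hf0, hp0⟩ := hv
    obtain rfl : g = 0 := eq_zero_of_symm_of_upper hg hg0
    obtain rfl : K = 0 := eq_zero_of_symm_of_upper hK hK0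
    obtain rfl : f = 0 := funext fun k => eq_zero_of_symm_of_upper (hf k) (hf0 k)
    obtain rfl : p = 0 := funext hp0
    rfl
  simpa [Module.finrank_prod, Module.finrank_pi, Module.finrank_pi_fintype, card_upperIdx] using
    LinearMap.finrank_le_finrank_of_injective hinj

section Eigenvectors

variable {n a b : Fin 3 → ℝ}

def adaptedSym (n a b : Fin 3 → ℝ) : Fin 6 → Mat3 :=
  ![vecMulVec n n, vecMulVec a b + vecMulVec b a, vecMulVec a a - vecMulVec b b,
    vecMulVec n a + vecMulVec a n, vecMulVec n b + vecMulVec b n, vecMulVec a a + vecMulVec b b]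

noncomputable def sqEigval : Fin 6 → ℝ := ![1, 1, 1, 3 / 2, 3 / 2, 3]

lemma sqEigval_pos (t : Fin 6) : 0 < sqEigval t := by
  fin_cases t <;> norm_num [sqEigval]

lemma adaptedSym_isSymm (n a b : Fin 3 → ℝ) (t : Fin 6) : (adaptedSym n a b t).IsSymm := by
  fin_cases t <;> simp [adaptedSym, IsSymm, transpose_vecMulVec, add_comm]

lemma frobInner_adaptedSym_of_ne (hF : IsOrthonormalFrame n a b) {t t' : Fin 6} (h : t ≠ t') :
    frobInner (adaptedSym n a b t) (adaptedSym n a b t') = 0 := by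
  fin_cases t <;> fin_cases t' <;>
    simp_all [adaptedSym, hF.n_n, hF.a_a, hF.b_b, hF.n_a, hF.n_b, hF.a_b, hF.a_n, hF.b_n, hF.b_a]

lemma frobInner_adaptedSym_self_pos (hF : IsOrthonormalFrame n a b) (t : Fin 6) :
    0 < frobInner (adaptedSym n a b t) (adaptedSym n a b t) := by
  fin_cases t <;>
    norm_num [adaptedSym, hF.n_n, hF.a_a, hF.b_b, hF.n_a, hF.n_b, hF.a_b, hF.a_n, hF.b_n, hF.b_a]

lemma bopt_bopt_adaptedSym (hF : IsOrthonormalFrame n a b) (t : Fin 6) :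
    bopt n (bopt n (kVec (adaptedSym n a b t))) = sqEigval t • kVec (adaptedSym n a b t) := by
  rw [bopt_bopt_kVec n hF.n_n, ← kVec_smul]
  congr 1
  fin_cases t <;>
    simp [adaptedSym, sqEigval, add_mulVec, sub_mulVec, vecMulVec_mulVec, hF.n_n, hF.a_a, hF.b_b,
      hF.n_a, hF.n_b, hF.a_b, hF.a_n, hF.b_n, hF.b_a, ← hF.vecMulVec_add_vecMulVec_add_vecMulVec,
      vecMulVec_smul, smul_vecMulVec, vecMulVec_neg, neg_vecMulVec] <;>
    module

/-- With `f = n ⊗ normalKer n p` the `p`-terms of `K̃` cancel, giving a kernel vector for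
every `p`. -/
noncomputable def normalKer (n p : Fin 3 → ℝ) : Mat3 :=
  (1 / 2 : ℝ) • (vecMulVec n p + vecMulVec p n) - (n ⬝ᵥ p) • 1

lemma normalKer_isSymm (n p : Fin 3 → ℝ) : (normalKer n p).IsSymm := by
  simp [normalKer, IsSymm, transpose_vecMulVec, add_comm]

lemma bopt_fpVec_normalKer (hn : n ⬝ᵥ n = 1) (p : Fin 3 → ℝ) :
    bopt n (fpVec (fun k => n k • normalKer n p) p) = 0 := by
  rw [bopt_fpVec, sum_smul_smul, hn, one_smul, normalKer]
  simp

def frameVec (n a b : Fin 3 → ℝ) : Fin 3 → Fin 3 → ℝ := ![n, a, b]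

def tangentVec (a b : Fin 3 → ℝ) : Fin 2 → Fin 3 → ℝ := ![a, b]

/-- `.inl (σ, t)` indexes the eigenvector for `± √(sqEigval t)` (sign `σ`); the summands of
`.inr` index the kernel vectors of `g`-type, of type `u ⊗ S` with `u ⊥ n`, and with `p ≠ 0`. -/
abbrev EigIdx : Type := (Bool × Fin 6) ⊕ Fin 6 ⊕ (Fin 2 × Fin 6) ⊕ Fin 3

noncomputable def eigval : EigIdx → ℝ
  | .inl (σ, t) => if σ then √(sqEigval t) else -√(sqEigval t)
  | .inr _ => 0

noncomputable def eigvec (n a b : Fin 3 → ℝ) : EigIdx → Wt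
  | .inl (σ, t) =>
      eigval (.inl (σ, t)) • kVec (adaptedSym n a b t) + bopt n (kVec (adaptedSym n a b t))
  | .inr (.inl t) => gVec (adaptedSym n a b t)
  | .inr (.inr (.inl (c, t))) => fpVec (fun k => tangentVec a b c k • adaptedSym n a b t) 0
  | .inr (.inr (.inr r)) =>
      fpVec (fun k => n k • normalKer n (frameVec n a b r)) (frameVec n a b r)

lemma eigval_mul_self (σ : Bool) (t : Fin 6) :
    eigval (.inl (σ, t)) * eigval (.inl (σ, t)) = sqEigval t := by
  cases σ <;> simp [eigval, Real.mul_self_sqrt (sqEigval_pos t).le]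

lemma bopt_eigvec (hF : IsOrthonormalFrame n a b) (m : EigIdx) :
    bopt n (eigvec n a b m) = eigval m • eigvec n a b m := by
  rcases m with ⟨σ, t⟩ | t | ⟨c, t⟩ | r
  · have h := bopt_bopt_adaptedSym hF t
    rw [← eigval_mul_self σ t] at h
    exact (boptLin n).map_smul_add_self_of_map_map h
  · simp [eigvec, eigval, bopt_gVec]
  · fin_cases c <;> simp [eigvec, eigval, bopt_fpVec, sum_smul_smul, tangentVec, hF.n_a, hF.n_b]
  · simp [eigvec, eigval, bopt_fpVec_normalKer hF.n_n]

lemma eigvec_mem (m : EigIdx) : eigvec n a b m ∈ Vtsub := by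
  rcases m with ⟨σ, t⟩ | t | ⟨c, t⟩ | r
  · refine Vtsub.add_mem (Vtsub.smul_mem _ (kVec_mem (adaptedSym_isSymm n a b t))) ?_
    rw [bopt_kVec]
    exact fpVec_mem (fun k => (adaptedSym_isSymm n a b t).smul _) _
  · exact gVec_mem (adaptedSym_isSymm n a b t)
  · exact fpVec_mem (fun k => (adaptedSym_isSymm n a b t).smul _) _
  · exact fpVec_mem (fun k => (normalKer_isSymm _ _).smul _) _

lemma iptForm_eigvec_inl_inl (hF : IsOrthonormalFrame n a b) (σ σ' : Bool) (t t' : Fin 6) :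
    iptForm (eigvec n a b (.inl (σ, t))) (eigvec n a b (.inl (σ', t'))) =
      (eigval (.inl (σ, t)) * eigval (.inl (σ', t')) + sqEigval t') *
        frobInner (adaptedSym n a b t) (adaptedSym n a b t') := by
  have hsymm :
      iptForm (bopt n (kVec (adaptedSym n a b t))) (bopt n (kVec (adaptedSym n a b t'))) =
        sqEigval t' * frobInner (adaptedSym n a b t) (adaptedSym n a b t') := by
    rw [iptForm_bopt_comm n (kVec_mem (adaptedSym_isSymm n a b t)).2.1,
      bopt_bopt_adaptedSym hF, map_smul, iptForm_kVec_kVec, smul_eq_mul]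
    rw [bopt_kVec]
    exact (fpVec_mem (fun k => (adaptedSym_isSymm n a b t').smul _) _).2.1
  simp only [eigvec, map_add, map_smul, LinearMap.add_apply, LinearMap.smul_apply, hsymm,
    smul_eq_mul, iptForm_kVec_left]
  rw [iptForm_comm, iptForm_kVec_left]
  simp only [bopt_kVec]
  simp [fpVec, kVec]
  ring

lemma iptForm_eigvec_inl_inr (hF : IsOrthonormalFrame n a b) (σ : Bool) (t : Fin 6)
    (k : Fin 6 ⊕ (Fin 2 × Fin 6) ⊕ Fin 3) :
    iptForm (eigvec n a b (.inl (σ, t))) (eigvec n a b (.inr k)) = 0 := by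
  have hbz : bopt n (eigvec n a b (.inr k)) = 0 := by
    simpa [eigval] using bopt_eigvec hF (.inr k)
  have hzK : (eigvec n a b (.inr k)).2.1 = (0 : Mat3) := by rcases k with _ | _ | _ <;> rfl
  exact iptForm_smul_kVec_add_bopt_of_bopt_eq_zero n (adaptedSym_isSymm n a b t) _
    (eigvec_mem _) hbz hzK

lemma iptForm_eigvec_inr_inr (hF : IsOrthonormalFrame n a b)
    {k k' : Fin 6 ⊕ (Fin 2 × Fin 6) ⊕ Fin 3} (h : k ≠ k') :
    iptForm (eigvec n a b (.inr k)) (eigvec n a b (.inr k')) = 0 := by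
  rcases k with t | ⟨c, t⟩ | r <;> rcases k' with t' | ⟨c', t'⟩ | r' <;>
    simp only [eigvec, iptForm_gVec_gVec, iptForm_gVec_fpVec, iptForm_fpVec_fpVec,
      sum_frobInner_smul_smul, dotProduct_zero, zero_dotProduct, add_zero]
  · exact frobInner_adaptedSym_of_ne hF (by simpa using h)
  · rw [iptForm_comm, iptForm_gVec_fpVec]
  · by_cases htt : t = t'
    · have hcc : c ≠ c' := by rintro rfl; exact h (by rw [htt])
      fin_cases c <;> fin_cases c' <;> simp_all [tangentVec, hF.a_b, hF.b_a]
    · rw [frobInner_adaptedSym_of_ne hF htt, mul_zero]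
  · fin_cases c <;> simp [tangentVec, hF.a_n, hF.b_n]
  · rw [iptForm_comm, iptForm_gVec_fpVec]
  · fin_cases c' <;> simp [tangentVec, hF.n_a, hF.n_b]
  · have hrr : r ≠ r' := by simpa using h
    fin_cases r <;> fin_cases r' <;>
      simp_all [frameVec, normalKer, hF.n_n, hF.n_a, hF.n_b, hF.a_b, hF.a_n, hF.b_n, hF.b_a]

lemma iptForm_eigvec_of_ne (hF : IsOrthonormalFrame n a b) {m m' : EigIdx} (h : m ≠ m') :
    iptForm (eigvec n a b m) (eigvec n a b m') = 0 := by
  rcases m with ⟨σ, t⟩ | k <;> rcases m' with ⟨σ', t'⟩ | k'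
  · rw [iptForm_eigvec_inl_inl hF]
    by_cases htt : t = t'
    · subst htt
      have hσ : σ ≠ σ' := by rintro rfl; exact h rfl
      cases σ <;> cases σ' <;> simp_all [eigval, Real.mul_self_sqrt (sqEigval_pos t).le]
    · rw [frobInner_adaptedSym_of_ne hF htt, mul_zero]
  · exact iptForm_eigvec_inl_inr hF σ t k'
  · rw [iptForm_comm]
    exact iptForm_eigvec_inl_inr hF σ' t' k
  · exact iptForm_eigvec_inr_inr hF fun hk => h (congrArg _ hk)

lemma iptForm_eigvec_self_pos (hF : IsOrthonormalFrame n a b) (m : EigIdx) :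
    0 < iptForm (eigvec n a b m) (eigvec n a b m) := by
  rcases m with ⟨σ, t⟩ | t | ⟨c, t⟩ | r
  · rw [iptForm_eigvec_inl_inl hF, eigval_mul_self]
    have := sqEigval_pos t
    have := frobInner_adaptedSym_self_pos hF t
    positivity
  · simpa [eigvec] using frobInner_adaptedSym_self_pos hF t
  · simp only [eigvec, iptForm_fpVec_fpVec, sum_frobInner_smul_smul, dotProduct_zero, add_zero]
    have := frobInner_adaptedSym_self_pos hF t
    fin_cases c <;> simpa [tangentVec, hF.a_a, hF.b_b]
  · simp only [eigvec, iptForm_fpVec_fpVec, sum_frobInner_smul_smul]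
    fin_cases r <;>
      norm_num [frameVec, normalKer, hF.n_n, hF.a_a, hF.b_b, hF.n_a, hF.n_b, hF.a_b, hF.a_n,
        hF.b_n, hF.b_a]

lemma linearIndependent_eigvec (hF : IsOrthonormalFrame n a b) :
    LinearIndependent ℝ fun m => (⟨eigvec n a b m, eigvec_mem m⟩ : Vtsub) :=
  LinearIndependent.of_comp Vtsub.subtype <|
    iptForm.linearIndependent_of_iIsOrtho (fun _ _ h => iptForm_eigvec_of_ne hF h)
      fun m => (iptForm_eigvec_self_pos hF m).ne'

lemma card_eigIdx : Fintype.card EigIdx = 33 := by decide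

noncomputable def eigenbasis (hF : IsOrthonormalFrame n a b) : Module.Basis EigIdx ℝ Vtsub :=
  basisOfLinearIndependentOfCardEqFinrank (linearIndependent_eigvec hF) <|
    le_antisymm (linearIndependent_eigvec hF).fintype_card_le_finrank
      (card_eigIdx ▸ finrank_Vtsub_le)

lemma coe_eigenbasis (hF : IsOrthonormalFrame n a b) (m : EigIdx) :
    (eigenbasis hF m : Wt) = eigvec n a b m := by
  simp [eigenbasis]

def eigSign : EigIdx → SignType
  | .inl (σ, _) => if σ then 1 else -1
  | .inr _ => 0

lemma sign_eigval (m : EigIdx) : SignType.sign (eigval m) = eigSign m := by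
  rcases m with ⟨σ, t⟩ | _
  · cases σ <;> simp [eigval, eigSign, Real.sqrt_pos.2 (sqEigval_pos t)]
  · simp [eigval, eigSign]

lemma card_eigval_pos : (Finset.univ.filter fun m => 0 < eigval m).card = 6 := by
  simp_rw [← sign_eq_one_iff, sign_eigval]
  decide

lemma card_eigval_neg : (Finset.univ.filter fun m => eigval m < 0).card = 6 := by
  simp_rw [← sign_eq_neg_one_iff, sign_eigval]
  decide

lemma card_eigval_zero : (Finset.univ.filter fun m => eigval m = 0).card = 21 := by
  have h (m : EigIdx) : eigval m = 0 ↔ eigSign m = 0 := by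
    rw [← sign_eigval, sign_eq_zero_iff]
  simp_rw [h]
  decide

end Eigenvectors

/-- for every unit vector `n`, the symmetric boundary operator `Ã_n` on
the 33-dimensional space `Ṽ`, diagonalized in a basis of eigenvectors, has exactly six
positive, twenty-one zero, and six negative eigenvalues, counted with multiplicity. -/
theorem bopt_eigenvalue_counts
    (n : Fin 3 → ℝ) (hn : ∑ i, n i ^ 2 = 1) :
    ∃ (b : Module.Basis (Fin 33) ℝ Vtsub) (μ : Fin 33 → ℝ),
      (∀ i, bopt n (b i : Wt) = μ i • (b i : Wt)) ∧
      (Finset.univ.filter fun i => 0 < μ i).card = 6 ∧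
      (Finset.univ.filter fun i => μ i = 0).card = 21 ∧
      (Finset.univ.filter fun i => μ i < 0).card = 6 := by
  obtain ⟨a, b, hF⟩ := exists_isOrthonormalFrame n (by simpa [dotProduct, sq] using hn)
  let e : EigIdx ≃ Fin 33 := Fintype.equivFinOfCardEq card_eigIdx
  refine ⟨(eigenbasis hF).reindex e, fun i => eigval (e.symm i), fun i => ?_,
    (Finset.card_equiv e.symm (by simp)).trans card_eigval_pos,
    (Finset.card_equiv e.symm (by simp)).trans card_eigval_zero,
    (Finset.card_equiv e.symm (by simp)).trans card_eigval_neg⟩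
  simpa [coe_eigenbasis] using bopt_eigvec hF (e.symm i)
end
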